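/- arXiv:math/0502107 — 5 statements merged into one kernel-verified Lean document; each statement's English description precedes it below -/
import Mathlib

section
/- Let λ be a partition and x, y ∈ P_λ. Then y covers x in the rook poset P_λ if and only if x is obtained from y by performing a single switch move or a single push move. -/
namespace RookPoset

/-- A partition with `n` parts: `part i` is the (1-based) part `λ_{i+1}`.
The parts are weakly increasing and contain the staircase (`λ_i ≥ i`, 1-based),
which in particular makes them positive. -/
structure Partition (n : ℕ) where
  part : Fin n → ℕ
  mono : Monotone part
  staircase : ∀ i : Fin n, (i : ℕ) + 1 ≤ part i

/-- The largest part; equals `λ_n` when `n > 0`. -/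
def Partition.maxPart {n : ℕ} (lam : Partition n) : ℕ :=
  Finset.univ.sup lam.part

/-- The part `λ_k` in 1-based indexing, with the convention `λ_m = n + 1` for `m > n`. -/
def Partition.partAt {n : ℕ} (lam : Partition n) (k : ℕ) : ℕ :=
  if h : 1 ≤ k ∧ k ≤ n then lam.part ⟨k - 1, by omega⟩ else n + 1

/-- The GJW sequence `(λ_1 - 1, λ_2 - 2, …, λ_n - n)` of a partition. -/
def Partition.gjw {n : ℕ} (lam : Partition n) : List ℕ :=
  (List.finRange n).map fun i => lam.part i - ((i : ℕ) + 1)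

/-- A maximal rook placement on the Ferrers board of `lam`: `col i` is the (1-based)
column of the rook in the (1-based) row `i + 1` (rows indexed bottom-up). -/
structure Placement {n : ℕ} (lam : Partition n) where
  col : Fin n → ℕ
  inj : Function.Injective col
  pos : ∀ i, 1 ≤ col i
  le_part : ∀ i, col i ≤ lam.part i

/-- The increasingly sorted list of the values `x i` over indices `i` with `(i : ℕ) < j`,
i.e. the sorted initial segment `{x_1, …, x_j}` (1-based). -/
def initSeg {n : ℕ} (x : Fin n → ℕ) (j : ℕ) : List ℕ :=
  ((Finset.univ.filter fun i : Fin n => (i : ℕ) < j).image x).sort (· ≤ ·)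

/-- The rook poset order: `x ≤ y` iff each sorted initial segment of `x` is
componentwise at most the corresponding sorted initial segment of `y`. -/
def rle {n : ℕ} {lam : Partition n} (x y : Placement lam) : Prop :=
  ∀ j : ℕ, List.Forall₂ (· ≤ ·) (initSeg x.col j) (initSeg y.col j)

/-- `y` covers `x` in the rook poset. -/
def rcovers {n : ℕ} {lam : Partition n} (x y : Placement lam) : Prop :=
  rle x y ∧ x ≠ y ∧ ∀ z : Placement lam, rle x z → rle z y → z = x ∨ z = y

/-- `y` covers `x` in the subposet induced on `S`. -/
def rcoversIn {n : ℕ} {lam : Partition n} (S : Set (Placement lam)) (x y : Placement lam) :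
    Prop :=
  x ∈ S ∧ y ∈ S ∧ rle x y ∧ x ≠ y ∧ ∀ z ∈ S, rle x z → rle z y → z = x ∨ z = y

/-- `t` is the greedy placement `1̂`: for each row in turn (bottom-up), the rook is placed
in the largest column `≤ λ_i` not used by a lower row. -/
def IsGreedy {n : ℕ} {lam : Partition n} (t : Placement lam) : Prop :=
  ∀ i : Fin n, ∀ m : ℕ, 1 ≤ m → m ≤ lam.part i →
    (∀ k : Fin n, k < i → t.col k ≠ m) → m ≤ t.col i

/-- `x` is obtained from `y` by the switch move on the rooks in rows `i < k`:
the rectangle spanned by the rooks at `(i, y.col i)` and `(k, y.col k)` contains no other rook,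
and the two rooks exchange columns. -/
def SwitchMove {n : ℕ} {lam : Partition n} (y x : Placement lam) (i k : Fin n) : Prop :=
  i < k ∧ y.col k < y.col i ∧
  (∀ r : Fin n, i ≤ r → r ≤ k → y.col k ≤ y.col r → y.col r ≤ y.col i → r = i ∨ r = k) ∧
  x.col i = y.col k ∧ x.col k = y.col i ∧
  ∀ r : Fin n, r ≠ i → r ≠ k → x.col r = y.col r

/-- `x` is obtained from `y` by a push move on the rook in row `i`: the rook moves to an
empty column `c` to its left such that every column strictly between `c` and its old column
contains a rook in a row below row `i`. -/
def PushMove {n : ℕ} {lam : Partition n} (y x : Placement lam) (i : Fin n) : Prop :=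
  ∃ c : ℕ, 1 ≤ c ∧ c < y.col i ∧ (∀ r : Fin n, y.col r ≠ c) ∧
    (∀ d : ℕ, c < d → d < y.col i → ∃ r : Fin n, r < i ∧ y.col r = d) ∧
    x.col i = c ∧ ∀ r : Fin n, r ≠ i → x.col r = y.col r

/-- `x` is obtained from `y` by a single switch or push move on the rook in row `i`. -/
def MoveOnRow {n : ℕ} {lam : Partition n} (y x : Placement lam) (i : Fin n) : Prop :=
  (∃ k : Fin n, SwitchMove y x i k) ∨ PushMove y x i

/-- Two coatoms `c, c'` of the rook poset (with top element `t`) are entangled: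
there are two distinct elements each of which is covered by both `c` and `c'`
and lies below no other coatom. -/
def Entangled {n : ℕ} {lam : Partition n} (t c c' : Placement lam) : Prop :=
  ∃ z₁ z₂ : Placement lam, z₁ ≠ z₂ ∧
    (rcovers z₁ c ∧ rcovers z₁ c' ∧
      ∀ d : Placement lam, rcovers d t → d ≠ c → d ≠ c' → ¬ rle z₁ d) ∧
    (rcovers z₂ c ∧ rcovers z₂ c' ∧
      ∀ d : Placement lam, rcovers d t → d ≠ c → d ≠ c' → ¬ rle z₂ d)

/-- `X_I`: the set of elements of the rook poset lying below no coatom outside `I`. -/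
def Xset {n : ℕ} {lam : Partition n} (t : Placement lam) (I : Set (Placement lam)) :
    Set (Placement lam) :=
  {z : Placement lam | ∀ c' : Placement lam, rcovers c' t → c' ∉ I → ¬ rle z c'}

/-- The completed permutation `σ_x` of `{1, …, λ_n}` (as a function on 1-based positions):
position `i ≤ n` holds `x_i`, and the remaining positions hold the unused values in
increasing order (i.e. each subsequent position receives the smallest value not yet used). -/
def Placement.sigma {n : ℕ} {lam : Partition n} (x : Placement lam) : ℕ → ℕ := fun a =>
  if h : 1 ≤ a ∧ a ≤ n then x.col ⟨a - 1, by omega⟩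
  else ((Finset.Icc 1 lam.maxPart \ Finset.univ.image x.col).sort (· ≤ ·)).getD (a - n - 1) 0

/-- The rank `r(x)`: the number of inversions of the completed permutation `σ_x`. -/
def Placement.rank {n : ℕ} {lam : Partition n} (x : Placement lam) : ℕ :=
  ((Finset.Icc 1 lam.maxPart ×ˢ Finset.Icc 1 lam.maxPart).filter
    fun p => p.1 < p.2 ∧ x.sigma p.2 < x.sigma p.1).card

/-- Break a list after every entry equal to `1`. -/
def breakAfterOnes : List ℕ → List (List ℕ)
  | [] => []
  | a :: rest =>
    if a = 1 then [a] :: breakAfterOnes rest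
    else
      match breakAfterOnes rest with
      | [] => [[a]]
      | b :: bs => (a :: b) :: bs

/-- The multiset of blocks of a partition: break the GJW sequence after every entry
equal to `1` and delete all entries equal to `0` (discarding empty blocks). -/
def Partition.blocks {n : ℕ} (lam : Partition n) : Multiset (List ℕ) :=
  (((breakAfterOnes lam.gjw).map fun b => b.filter (· ≠ 0)).filter
    (· ≠ ([] : List ℕ)) : List (List ℕ))

/-- The conjugate of a block `b = (g_1, …, g_k)` ending in `1`: it is the GJW sequence of the
conjugate partition `ν'` of the partition `ν` with `ν_i = g_i + i`, where
`ν'_i = k + 2 - min {m | ν_m ≥ k + 2 - i}` with the convention `ν_{k+1} = k + 1`. -/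
noncomputable def conjBlock (b : List ℕ) : List ℕ :=
  let k := b.length
  let nu : ℕ → ℕ := fun m => if m ≤ k then b.getD (m - 1) 0 + m else k + 1
  (List.range k).map fun i0 =>
    let i := i0 + 1
    (k + 2 - sInf {m : ℕ | 1 ≤ m ∧ k + 2 - i ≤ nu m}) - i

/-- A block ends in `1`. -/
def endsInOne (b : List ℕ) : Prop := b.getLast? = some 1

/-- Two blocks are equivalent when they are equal, or one ends in `1` and the other is its
conjugate block. -/
def BlockEquiv (b b' : List ℕ) : Prop :=
  b = b' ∨ (endsInOne b ∧ b' = conjBlock b) ∨ (endsInOne b' ∧ b = conjBlock b')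

/-- Two partitions have matching block data: their multisets of blocks become equal after
replacing some blocks ending in `1` by their conjugate blocks. -/
def MatchingBlocks {n m : ℕ} (lam : Partition n) (mu : Partition m) : Prop :=
  Multiset.Rel BlockEquiv lam.blocks mu.blocks

/-- The rook posets of `lam` and `mu` are isomorphic as partially ordered sets. -/
def RookIso {n m : ℕ} (lam : Partition n) (mu : Partition m) : Prop :=
  ∃ e : Placement lam ≃ Placement mu, ∀ a b : Placement lam, rle a b ↔ rle (e a) (e b)

/-- A function `τ`, viewed as a permutation of `{1, …, N}`, is `312`-avoiding. -/
def Avoids312 (N : ℕ) (τ : ℕ → ℕ) : Prop :=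
  ∀ a b c : ℕ, 1 ≤ a → a < b → b < c → c ≤ N → ¬ (τ b < τ c ∧ τ c < τ a)

/-- A permutation of `Fin N` is `312`-avoiding. -/
def Avoids312P {N : ℕ} (τ : Equiv.Perm (Fin N)) : Prop :=
  ∀ a b c : Fin N, a < b → b < c → ¬ (τ b < τ c ∧ τ c < τ a)

/-- The Bruhat order on permutations, characterized by componentwise dominance of the
increasingly sorted initial segments. -/
def bruhatLE {N : ℕ} (σ τ : Equiv.Perm (Fin N)) : Prop :=
  ∀ j : ℕ, List.Forall₂ (· ≤ ·)
    (initSeg (fun a : Fin N => (σ a : ℕ)) j) (initSeg (fun a : Fin N => (τ a : ℕ)) j)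

/-! Write `N_f(j, v)` (`countGE f 0 j v`) for the number of rows `r < j` with `f r ≥ v`. A sorted
list is dominated componentwise by another of the same length iff each of its upper level sets is
smaller, so `x ≤ y` iff `N_x ≤ N_y` pointwise.

A switch or push move taking `y` to `x` lowers `N` by the indicator of one box
`(i, J] × (lo, hi]` of `(j, v)`. Anything squeezed between `x` and `y` therefore has the counts
of `y` off that box; since row `r` is read off from `N(r, ·)` and `N(r + 1, ·)`, it agrees with `y`
outside the rows and columns of the box, and the emptiness condition of the move leaves only `x`
and `y`.

Conversely, if `x < y`, let `i` be the first row where they differ, so that `x_i < y_i`. If a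
higher rook of `y` lies in the columns `[x_i, y_i)`, switch row `i` with the lowest such rook;
otherwise push row `i` to the largest empty column below `y_i`. In both cases the box lies where
`N_x < N_y`, so the result is still above `x`. -/

section SortedLists

variable {α : Type*} [LinearOrder α]

theorem countP_le_countP_of_forall₂ {A B : List α} (h : List.Forall₂ (· ≤ ·) A B) (v : α) :
    A.countP (v ≤ ·) ≤ B.countP (v ≤ ·) := by
  induction h with
  | nil => rfl
  | @cons a b A B hab _ ih =>
    simp only [List.countP_cons, decide_eq_true_eq]
    by_cases hva : v ≤ a
    · simp only [hva, hva.trans hab, if_true]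
      omega
    · simp only [hva, if_false]
      omega

theorem forall₂_of_countP_le {A B : List α} (hA : A.Pairwise (· ≤ ·))
    (hB : B.Pairwise (· ≤ ·)) (hlen : A.length = B.length)
    (h : ∀ v, A.countP (v ≤ ·) ≤ B.countP (v ≤ ·)) : List.Forall₂ (· ≤ ·) A B := by
  induction A generalizing B with
  | nil => cases B <;> simp_all
  | cons a A ih =>
    obtain _ | ⟨b, B⟩ := B
    · simp at hlen
    rw [List.pairwise_cons] at hA hB
    simp only [List.length_cons, add_left_inj] at hlen
    have hall : ∀ {C : List α} {w : α}, (∀ c ∈ C, w ≤ c) → C.countP (w ≤ ·) = C.length :=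
      fun hC => List.countP_eq_length.2 (by simpa using hC)
    simp only [List.countP_cons, decide_eq_true_eq] at h
    have hab : a ≤ b := by
      by_contra hba
      have := h a
      rw [hall hA.1, if_pos le_rfl, if_neg hba] at this
      have := B.countP_le_length (p := (a ≤ ·))
      omega
    refine .cons hab (ih hA.2 hB.2 hlen fun v => ?_)
    by_cases hva : v ≤ a
    · have := h v
      rw [if_pos hva, if_pos (hva.trans hab)] at this
      omega
    by_cases hvb : v ≤ b
    · rw [hall fun c hc => hvb.trans (hB.1 c hc), ← hlen]
      exact List.countP_le_length
    · have := h v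
      rw [if_neg hva, if_neg hvb] at this
      omega

end SortedLists

open Finset

section CountGE

variable {n : ℕ}

def countGE (f : Fin n → ℕ) (a b v : ℕ) : ℕ :=
  #{r : Fin n | a ≤ (r : ℕ) ∧ (r : ℕ) < b ∧ v ≤ f r}

theorem countGE_add (f : Fin n → ℕ) {a b c : ℕ} (hab : a ≤ b) (hbc : b ≤ c) (v : ℕ) :
    countGE f a b v + countGE f b c v = countGE f a c v := by
  unfold countGE
  rw [← card_union_of_disjoint (disjoint_filter.2 fun r _ h₁ h₂ => by omega), ← filter_or]
  congr 1
  ext r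
  simp only [mem_filter, mem_univ, true_and]
  omega

theorem countGE_succ_self (f : Fin n → ℕ) (i : Fin n) (v : ℕ) :
    countGE f i (i + 1) v = if v ≤ f i then 1 else 0 := by
  have hrow : ∀ r : Fin n, (i : ℕ) ≤ r ∧ (r : ℕ) < i + 1 ↔ r = i := fun r => by
    rw [Fin.ext_iff]; omega
  unfold countGE
  split_ifs with hv
  · rw [card_eq_one]
    refine ⟨i, ?_⟩
    ext r
    simp only [mem_filter, mem_univ, true_and, mem_singleton, ← and_assoc, hrow]
    exact ⟨And.left, fun hr => ⟨hr, hr ▸ hv⟩⟩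
  · rw [card_eq_zero, filter_eq_empty_iff]
    rintro r - ⟨h₁, h₂, hr⟩
    exact hv ((hrow r).1 ⟨h₁, h₂⟩ ▸ hr)

theorem countGE_congr {f g : Fin n → ℕ} {a b v w : ℕ}
    (h : ∀ r : Fin n, a ≤ (r : ℕ) → (r : ℕ) < b → (v ≤ f r ↔ w ≤ g r)) :
    countGE f a b v = countGE g a b w := by
  unfold countGE
  congr 1
  ext r
  simp only [mem_filter, mem_univ, true_and]
  exact ⟨fun ⟨h₁, h₂, h₃⟩ => ⟨h₁, h₂, (h r h₁ h₂).1 h₃⟩,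
    fun ⟨h₁, h₂, h₃⟩ => ⟨h₁, h₂, (h r h₁ h₂).2 h₃⟩⟩

theorem countGE_antitone (f : Fin n → ℕ) (a b : ℕ) : Antitone (countGE f a b) :=
  fun _ _ hvw => card_le_card <| monotone_filter_right _ fun _ _ ⟨h₁, h₂, h₃⟩ =>
    ⟨h₁, h₂, hvw.trans h₃⟩

end CountGE

section Order

variable {n : ℕ} {lam : Partition n}

theorem Placement.ext {x y : Placement lam} (h : ∀ r, x.col r = y.col r) : x = y := by
  obtain ⟨f, _⟩ := x
  obtain ⟨g, _⟩ := y
  obtain rfl : f = g := funext h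
  rfl

theorem countP_initSeg {f : Fin n → ℕ} (hf : Function.Injective f) (j v : ℕ) :
    (initSeg f j).countP (v ≤ ·) = countGE f 0 j v := by
  rw [initSeg, ← Multiset.coe_countP, Finset.sort_eq, Multiset.countP_eq_card_filter,
    ← Finset.filter_val, Finset.card_val, Finset.filter_image, card_image_of_injective _ hf,
    filter_filter, countGE]
  simp only [zero_le, true_and]

theorem length_initSeg {f : Fin n → ℕ} (hf : Function.Injective f) (j : ℕ) :
    (initSeg f j).length = #{r : Fin n | (r : ℕ) < j} := by
  rw [initSeg, length_sort, card_image_of_injective _ hf]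

theorem rle_iff_countGE {x y : Placement lam} :
    rle x y ↔ ∀ j v, countGE x.col 0 j v ≤ countGE y.col 0 j v := by
  refine ⟨fun h j v => ?_, fun h j => ?_⟩
  · rw [← countP_initSeg x.inj, ← countP_initSeg y.inj]
    exact countP_le_countP_of_forall₂ (h j) v
  · refine forall₂_of_countP_le (pairwise_sort _ _) (pairwise_sort _ _)
      (by rw [length_initSeg x.inj, length_initSeg y.inj]) fun v => ?_
    rw [countP_initSeg x.inj, countP_initSeg y.inj]
    exact h j v

end Order

section Perturbation

variable {n : ℕ}

theorem countGE_add_ite_of_eq_off {f g : Fin n → ℕ} {i : Fin n}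
    (h : ∀ r, r ≠ i → f r = g r) (j v : ℕ) :
    countGE f 0 j v + (if (i : ℕ) < j ∧ v ≤ g i then 1 else 0) =
      countGE g 0 j v + (if (i : ℕ) < j ∧ v ≤ f i then 1 else 0) := by
  have hoff : ∀ a b : ℕ, (i : ℕ) < a ∨ b ≤ i → countGE f a b v = countGE g a b v :=
    fun a b hab => countGE_congr fun r h₁ h₂ => by
      rw [h r fun hri => by rw [hri] at h₁ h₂; omega]
  by_cases hij : (i : ℕ) < j
  · have hf₁ := countGE_add f (Nat.zero_le i) hij.le v
    have hf₂ := countGE_add f (Nat.le_add_right _ 1) hij v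
    have hg₁ := countGE_add g (Nat.zero_le i) hij.le v
    have hg₂ := countGE_add g (Nat.le_add_right _ 1) hij v
    rw [countGE_succ_self] at hf₂ hg₂
    have h₀ := hoff 0 i (.inr le_rfl)
    have h₁ := hoff (i + 1) j (.inl (Nat.lt_add_one _))
    split_ifs at * <;> omega
  · simp only [hij, false_and, if_false, hoff 0 j (.inr (not_lt.1 hij))]

theorem countGE_add_ite_add_ite_of_eq_off {f g : Fin n → ℕ} {i k : Fin n} (hik : i ≠ k)
    (h : ∀ r, r ≠ i → r ≠ k → f r = g r) (j v : ℕ) :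
    countGE f 0 j v + (if (i : ℕ) < j ∧ v ≤ g i then 1 else 0) +
        (if (k : ℕ) < j ∧ v ≤ g k then 1 else 0) =
      countGE g 0 j v + (if (i : ℕ) < j ∧ v ≤ f i then 1 else 0) +
        (if (k : ℕ) < j ∧ v ≤ f k then 1 else 0) := by
  have hfm := countGE_add_ite_of_eq_off (f := f) (g := Function.update g i (f i)) (i := k)
    (fun r hrk => by
      by_cases hri : r = i
      · rw [hri, Function.update_self]
      · rw [Function.update_of_ne hri, h r hri hrk]) j v
  have hmg := countGE_add_ite_of_eq_off (g := g) (i := i)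
    (fun r hri => Function.update_of_ne hri (f i) g) j v
  rw [Function.update_of_ne hik.symm] at hfm
  rw [Function.update_self] at hmg
  omega

end Perturbation

theorem eq_or_mem_Icc_of_forall_le_iff {lo hi a b : ℕ}
    (h : ∀ v, v ≤ lo ∨ hi < v → (v ≤ a ↔ v ≤ b)) :
    a = b ∨ (lo ≤ a ∧ a ≤ hi ∧ lo ≤ b ∧ b ≤ hi) := by
  have := h a
  have := h b
  have := h (a + 1)
  have := h (b + 1)
  omega

theorem eq_and_eq_or_of_forall_ite_add_ite {p q a b : ℕ}
    (h : ∀ v, (if v ≤ p then 1 else 0) + (if v ≤ q then 1 else 0) =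
      (if v ≤ a then 1 else 0) + (if v ≤ b then 1 else 0)) :
    p = a ∧ q = b ∨ p = b ∧ q = a := by
  have hmax : max p q = max a b := eq_of_forall_le_iff fun v => by
    have := h v
    simp only [le_max_iff]
    split_ifs at this <;> omega
  have hmin : min p q = min a b := eq_of_forall_le_iff fun v => by
    have := h v
    simp only [le_min_iff]
    split_ifs at this <;> omega
  omega

section Rows

variable {n : ℕ}

theorem le_apply_iff_of_countGE_eq {f g : Fin n → ℕ} (r : Fin n) {v : ℕ}
    (h₀ : countGE f 0 r v = countGE g 0 r v)
    (h₁ : countGE f 0 (r + 1) v = countGE g 0 (r + 1) v) :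
    v ≤ f r ↔ v ≤ g r := by
  have hf := countGE_add f (Nat.zero_le r) (Nat.le_add_right _ 1) v
  have hg := countGE_add g (Nat.zero_le r) (Nat.le_add_right _ 1) v
  rw [countGE_succ_self] at hf hg
  split_ifs at hf hg <;> omega

theorem eq_or_mem_Icc_of_countGE_eq_off_box {f g : Fin n → ℕ} {i : Fin n} {J lo hi : ℕ}
    (h : ∀ j ≤ n, ∀ v, ¬((i : ℕ) < j ∧ j ≤ J ∧ lo < v ∧ v ≤ hi) →
      countGE f 0 j v = countGE g 0 j v) (r : Fin n) :
    f r = g r ∨ ((i : ℕ) ≤ r ∧ (r : ℕ) ≤ J ∧ lo ≤ f r ∧ f r ≤ hi ∧ lo ≤ g r ∧ g r ≤ hi) := by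
  have hrow : ∀ v, ¬((i : ℕ) ≤ r ∧ (r : ℕ) ≤ J ∧ lo < v ∧ v ≤ hi) → (v ≤ f r ↔ v ≤ g r) :=
    fun v hv => le_apply_iff_of_countGE_eq r (h r r.isLt.le v (by omega))
      (h (r + 1) r.isLt v (by omega))
  by_cases hr : (i : ℕ) ≤ r ∧ (r : ℕ) ≤ J
  · refine (eq_or_mem_Icc_of_forall_le_iff (lo := lo) (hi := hi) fun v hv =>
      hrow v (by omega)).imp_right fun hIcc => ⟨hr.1, hr.2, hIcc⟩
  · exact .inl (eq_of_forall_le_iff fun v => hrow v (by tauto))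

end Rows

section Moves

variable {n : ℕ} {lam : Partition n} {x y z : Placement lam} {i k : Fin n}

theorem PushMove.countGE_eq (h : PushMove y x i) (j v : ℕ) :
    countGE y.col 0 j v =
      countGE x.col 0 j v + if (i : ℕ) < j ∧ x.col i < v ∧ v ≤ y.col i then 1 else 0 := by
  obtain ⟨c, -, hcy, -, -, hxi, hoff⟩ := h
  have := countGE_add_ite_of_eq_off hoff j v
  split_ifs at * <;> omega

theorem SwitchMove.countGE_eq (h : SwitchMove y x i k) (j v : ℕ) :
    countGE y.col 0 j v = countGE x.col 0 j v +
      if (i : ℕ) < j ∧ j ≤ k ∧ y.col k < v ∧ v ≤ y.col i then 1 else 0 := by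
  obtain ⟨hik, hky, -, hxi, hxk, hoff⟩ := h
  have := countGE_add_ite_add_ite_of_eq_off hik.ne hoff j v
  rw [hxi, hxk] at this
  have : (i : ℕ) < k := hik
  split_ifs at * <;> omega

theorem PushMove.le (h : PushMove y x i) : rle x y :=
  rle_iff_countGE.2 fun j v => (h.countGE_eq j v).symm ▸ Nat.le_add_right _ _

theorem SwitchMove.le (h : SwitchMove y x i k) : rle x y :=
  rle_iff_countGE.2 fun j v => (h.countGE_eq j v).symm ▸ Nat.le_add_right _ _

theorem PushMove.ne (h : PushMove y x i) : x ≠ y := by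
  obtain ⟨c, -, hcy, -, -, hxi, -⟩ := h
  rintro rfl
  omega

theorem SwitchMove.ne (h : SwitchMove y x i k) : x ≠ y := by
  obtain ⟨-, hky, -, hxi, -⟩ := h
  rintro rfl
  omega

theorem PushMove.eq_or_eq_of_rle (h : PushMove y x i) (hxz : rle x z) (hzy : rle z y) :
    z = x ∨ z = y := by
  have hcount := h.countGE_eq
  obtain ⟨c, -, hcy, hfree, hbetween, hxi, hoff⟩ := h
  rw [rle_iff_countGE] at hxz hzy
  have hbox := eq_or_mem_Icc_of_countGE_eq_off_box (f := z.col) (g := y.col) (i := i)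
    (J := n) (lo := c) (hi := y.col i) fun j hj v hv => by
      have := hcount j v
      have := hxz j v
      have := hzy j v
      rw [hxi, if_neg (by omega)] at *
      omega
  have hlow : ∀ r : Fin n, (r : ℕ) < i → z.col r = y.col r :=
    fun r hr => (hbox r).resolve_right (by omega)
  have hrest : ∀ r, r ≠ i → z.col r = y.col r := by
    intro r hri
    refine (hbox r).resolve_right ?_
    rintro ⟨hir, -, -, -, hcr, hry⟩
    obtain hcr | hcr := hcr.lt_or_eq
    · obtain hry | hry := hry.lt_or_eq
      · obtain ⟨s, hsi, hs⟩ := hbetween _ hcr hry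
        obtain rfl := y.inj hs
        exact absurd hsi (Fin.not_lt.2 (Fin.le_def.2 hir))
      · exact hri (y.inj hry)
    · exact hfree r hcr.symm
  have hzi : z.col i = c ∨ z.col i = y.col i := by
    obtain hzi | ⟨-, -, hcz, hza, -⟩ := hbox i
    · exact .inr hzi
    by_contra! hne
    obtain ⟨s, hsi, hs⟩ := hbetween (z.col i) (by omega) (by omega)
    exact hsi.ne (z.inj ((hlow s hsi).trans hs))
  rcases hzi with hzi | hzi
  · refine .inl (Placement.ext fun r => ?_)
    by_cases hri : r = i
    · rw [hri, hzi, hxi]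
    · rw [hrest r hri, hoff r hri]
  · refine .inr (Placement.ext fun r => ?_)
    by_cases hri : r = i
    · rw [hri, hzi]
    · exact hrest r hri

theorem SwitchMove.eq_or_eq_of_rle (h : SwitchMove y x i k) (hxz : rle x z) (hzy : rle z y) :
    z = x ∨ z = y := by
  have hcount := h.countGE_eq
  obtain ⟨hik, hky, hrect, hxi, hxk, hoff⟩ := h
  rw [rle_iff_countGE] at hxz hzy
  have hout : ∀ j v, ¬((i : ℕ) < j ∧ j ≤ k ∧ y.col k < v ∧ v ≤ y.col i) →
      countGE z.col 0 j v = countGE y.col 0 j v := fun j v hv => by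
    have := hcount j v
    have := hxz j v
    have := hzy j v
    rw [if_neg hv] at *
    omega
  have hbox := eq_or_mem_Icc_of_countGE_eq_off_box (f := z.col) (g := y.col) (i := i)
    (J := k) fun j _ v => hout j v
  have hrest : ∀ r, r ≠ i → r ≠ k → z.col r = y.col r := by
    intro r hri hrk
    refine (hbox r).resolve_right ?_
    rintro ⟨hir, hrk', -, -, hkr, hri'⟩
    exact (hrect r (Fin.le_def.2 hir) (Fin.le_def.2 hrk') hkr hri').elim hri hrk
  have hsum : ∀ v, (if v ≤ z.col i then 1 else 0) + (if v ≤ z.col k then 1 else 0) =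
      (if v ≤ y.col i then 1 else 0) + (if v ≤ y.col k then 1 else 0) := fun v => by
    have := countGE_add_ite_add_ite_of_eq_off hik.ne hrest n v
    rw [hout n v (by omega)] at this
    simp only [i.isLt, k.isLt, true_and] at this
    omega
  rcases eq_and_eq_or_of_forall_ite_add_ite hsum with ⟨hzi, hzk⟩ | ⟨hzi, hzk⟩
  · refine .inr (Placement.ext fun r => ?_)
    by_cases hri : r = i
    · rw [hri, hzi]
    by_cases hrk : r = k
    · rw [hrk, hzk]
    exact hrest r hri hrk
  · refine .inl (Placement.ext fun r => ?_)
    by_cases hri : r = i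
    · rw [hri, hzi, hxi]
    by_cases hrk : r = k
    · rw [hrk, hzk, hxk]
    rw [hrest r hri hrk, hoff r hri hrk]

theorem PushMove.rcovers (h : PushMove y x i) : rcovers x y :=
  ⟨h.le, h.ne, fun _ hxz hzy => h.eq_or_eq_of_rle hxz hzy⟩

theorem SwitchMove.rcovers (h : SwitchMove y x i k) : rcovers x y :=
  ⟨h.le, h.ne, fun _ hxz hzy => h.eq_or_eq_of_rle hxz hzy⟩

end Moves

section FirstDifference

variable {n : ℕ} {f g : Fin n → ℕ} {i : Fin n}

theorem apply_lt_of_first_diff (hfg : ∀ j v, countGE f 0 j v ≤ countGE g 0 j v)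
    (hlow : ∀ r : Fin n, (r : ℕ) < i → f r = g r) (hne : f i ≠ g i) : f i < g i := by
  have h₀ : countGE f 0 i (f i) = countGE g 0 i (f i) :=
    countGE_congr fun r _ hr => by rw [hlow r hr]
  have hf := countGE_add f (Nat.zero_le i) (Nat.le_add_right _ 1) (f i)
  have hg := countGE_add g (Nat.zero_le i) (Nat.le_add_right _ 1) (f i)
  have := hfg (i + 1) (f i)
  rw [countGE_succ_self, if_pos le_rfl] at hf
  rw [countGE_succ_self] at hg
  split_ifs at hg <;> omega

theorem countGE_lt_of_first_diff (hfg : ∀ j v, countGE f 0 j v ≤ countGE g 0 j v)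
    (hlow : ∀ r : Fin n, (r : ℕ) < i → f r = g r) {j v : ℕ} (hij : (i : ℕ) < j)
    (hfv : f i < v) (hvg : v ≤ g i)
    (hgap : ∀ r : Fin n, (i : ℕ) < r → (r : ℕ) < j → ¬(f i ≤ g r ∧ g r < v)) :
    countGE f 0 j v < countGE g 0 j v := by
  have hsplit : ∀ (h : Fin n → ℕ) (w : ℕ), countGE h 0 j w =
      countGE h 0 i w + (if w ≤ h i then 1 else 0) + countGE h (i + 1) j w := fun h w => by
    rw [← countGE_succ_self, countGE_add h (Nat.zero_le i) (Nat.le_add_right _ 1),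
      countGE_add h (Nat.zero_le _) hij]
  have hlow' : ∀ w, countGE f 0 i w = countGE g 0 i w :=
    fun w => countGE_congr fun r _ hr => by rw [hlow r hr]
  have hf := countGE_antitone f (i + 1) j hfv.le
  have hg : countGE g (i + 1) j (f i) = countGE g (i + 1) j v :=
    countGE_congr fun r h₁ h₂ =>
      ⟨fun h => not_lt.1 fun h' => hgap r h₁ h₂ ⟨h, h'⟩, hfv.le.trans⟩
  have := hfg j (f i)
  rw [hsplit, hsplit, hlow'] at this
  rw [hsplit, hsplit, hlow', if_neg (not_le.2 hfv), if_pos hvg]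
  rw [if_pos le_rfl, if_pos (hfv.le.trans hvg)] at this
  omega

end FirstDifference

section Existence

variable {n : ℕ} {lam : Partition n} {x y : Placement lam} {i : Fin n}

theorem exists_switchMove {k : Fin n} (hik : i < k) (hki : y.col k < y.col i)
    (hrect : ∀ r : Fin n, i ≤ r → r ≤ k → y.col k ≤ y.col r → y.col r ≤ y.col i →
      r = i ∨ r = k) :
    ∃ x, SwitchMove y x i k := by
  have hle : ∀ r, y.col (Equiv.swap i k r) ≤ lam.part r := by
    intro r
    rcases eq_or_ne r i with rfl | hri
    · rw [Equiv.swap_apply_left]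
      exact hki.le.trans (y.le_part r)
    rcases eq_or_ne r k with rfl | hrk
    · rw [Equiv.swap_apply_right]
      exact (y.le_part i).trans (lam.mono hik.le)
    · rw [Equiv.swap_apply_of_ne_of_ne hri hrk]
      exact y.le_part r
  refine ⟨⟨y.col ∘ Equiv.swap i k, y.inj.comp (Equiv.swap i k).injective, fun _ => y.pos _, hle⟩,
    hik, hki, hrect, by simp, by simp, fun r hri hrk => ?_⟩
  simp [Equiv.swap_apply_of_ne_of_ne hri hrk]

theorem exists_pushMove {c : ℕ} (hc : 1 ≤ c) (hci : c < y.col i) (hfree : ∀ r, y.col r ≠ c)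
    (hbetween : ∀ d, c < d → d < y.col i → ∃ r, r < i ∧ y.col r = d) :
    ∃ x, PushMove y x i ∧ x.col i = c := by
  have hinj : Function.Injective (Function.update y.col i c) := by
    intro r s hrs
    by_cases hri : r = i <;> by_cases hsi : s = i
    · rw [hri, hsi]
    · rw [hri, Function.update_self, Function.update_of_ne hsi] at hrs
      exact absurd hrs.symm (hfree s)
    · rw [hsi, Function.update_self, Function.update_of_ne hri] at hrs
      exact absurd hrs (hfree r)
    · rw [Function.update_of_ne hri, Function.update_of_ne hsi] at hrs
      exact y.inj hrs
  have hle : ∀ r, Function.update y.col i c r ≤ lam.part r := by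
    intro r
    rcases eq_or_ne r i with rfl | hri
    · rw [Function.update_self]
      exact hci.le.trans (y.le_part r)
    · rw [Function.update_of_ne hri]
      exact y.le_part r
  have hpos : ∀ r, 1 ≤ Function.update y.col i c r := by
    intro r
    rcases eq_or_ne r i with rfl | hri
    · rwa [Function.update_self]
    · rw [Function.update_of_ne hri]
      exact y.pos r
  exact ⟨⟨_, hinj, hpos, hle⟩, ⟨c, hc, hci, hfree, hbetween, Function.update_self ..,
    fun r hri => Function.update_of_ne hri ..⟩, Function.update_self ..⟩

theorem exists_switchMove_between (hxy : rle x y)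
    (hlow : ∀ r : Fin n, (r : ℕ) < i → x.col r = y.col r)
    (hK : ∃ r, i < r ∧ x.col i ≤ y.col r ∧ y.col r < y.col i) :
    ∃ z k, SwitchMove y z i k ∧ rle x z := by
  rw [rle_iff_countGE] at hxy
  obtain ⟨k, ⟨hik, hxk, hki⟩, hmin⟩ := WellFounded.has_min wellFounded_lt
    {r | i < r ∧ x.col i ≤ y.col r ∧ y.col r < y.col i} hK
  have hgap : ∀ r, i < r → r < k → ¬(x.col i ≤ y.col r ∧ y.col r < y.col i) :=
    fun r hir hrk h => hmin r ⟨hir, h⟩ hrk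
  obtain ⟨z, hz⟩ := exists_switchMove hik hki fun r hir hrk hkr hri => by
    by_contra! hne
    exact hgap r (lt_of_le_of_ne hir hne.1.symm) (lt_of_le_of_ne hrk hne.2)
      ⟨hxk.trans hkr, lt_of_le_of_ne hri (y.inj.ne hne.1)⟩
  refine ⟨z, k, hz, rle_iff_countGE.2 fun j v => ?_⟩
  have := hz.countGE_eq j v
  split_ifs at this with hbox
  · have := countGE_lt_of_first_diff hxy hlow hbox.1 (by omega) hbox.2.2.2
      fun r hir hrj h => hgap r hir (Fin.lt_def.2 (by omega)) ⟨h.1, by omega⟩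
    omega
  · have := hxy j v
    omega

theorem exists_pushMove_between (hxy : rle x y)
    (hlow : ∀ r : Fin n, (r : ℕ) < i → x.col r = y.col r) (hlt : x.col i < y.col i)
    (hK : ∀ r, i < r → x.col i ≤ y.col r → y.col i ≤ y.col r) :
    ∃ z, PushMove y z i ∧ rle x z := by
  rw [rle_iff_countGE] at hxy
  let P d := x.col i ≤ d ∧ ∀ r, y.col r ≠ d
  have hxfree : P (x.col i) := by
    refine ⟨le_rfl, fun r hr => ?_⟩
    rcases lt_trichotomy r i with hri | rfl | hri
    · rw [← hlow r hri] at hr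
      exact hri.ne (x.inj hr)
    · omega
    · have := hK r hri hr.ge
      omega
  obtain ⟨c, hc, hcy, hmax⟩ : ∃ c, P c ∧ c < y.col i ∧ ∀ d, c < d → d < y.col i → ¬P d :=
    ⟨Nat.findGreatest P (y.col i - 1), Nat.findGreatest_spec (by omega) hxfree,
      (Nat.findGreatest_le _).trans_lt (by omega),
      fun d hcd hdy => Nat.findGreatest_is_greatest hcd (by omega)⟩
  obtain ⟨z, hz, hzi⟩ := exists_pushMove ((x.pos i).trans hc.1) hcy hc.2 fun d hcd hdy => by
    obtain ⟨r, hr⟩ : ∃ r, y.col r = d := by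
      simpa [P, hc.1.trans hcd.le] using hmax d hcd hdy
    refine ⟨r, ?_, hr⟩
    rcases lt_trichotomy r i with hri | rfl | hri
    · exact hri
    · omega
    · have := hK r hri (by omega)
      omega
  refine ⟨z, hz, rle_iff_countGE.2 fun j v => ?_⟩
  have := hz.countGE_eq j v
  split_ifs at this with hbox
  · have := countGE_lt_of_first_diff hxy hlow hbox.1 (by omega) hbox.2.2
      fun r hir _ h => by have := hK r hir h.1; omega
    omega
  · have := hxy j v
    omega

theorem exists_move_of_rle (hxy : rle x y) (hne : x ≠ y) :
    ∃ z, ((∃ i k, SwitchMove y z i k) ∨ ∃ i, PushMove y z i) ∧ rle x z := by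
  obtain ⟨i, hi, hmin⟩ := WellFounded.has_min wellFounded_lt {r | x.col r ≠ y.col r}
    (not_forall.1 fun h => hne (Placement.ext h))
  have hlow : ∀ r : Fin n, (r : ℕ) < i → x.col r = y.col r :=
    fun r hr => not_not.1 fun h => hmin r h hr
  by_cases hK : ∃ r, i < r ∧ x.col i ≤ y.col r ∧ y.col r < y.col i
  · obtain ⟨z, k, hz, hxz⟩ := exists_switchMove_between hxy hlow hK
    exact ⟨z, .inl ⟨i, k, hz⟩, hxz⟩
  · simp only [not_exists, not_and, not_lt] at hK
    have hlt := apply_lt_of_first_diff (rle_iff_countGE.1 hxy) hlow hi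
    obtain ⟨z, hz, hxz⟩ := exists_pushMove_between hxy hlow hlt hK
    exact ⟨z, .inr ⟨i, hz⟩, hxz⟩

end Existence

/-- `y` covers `x` in the rook poset if and only if `x` is obtained from `y`
by a single switch move or a single push move. -/
theorem rcovers_iff_move {n : ℕ} (lam : Partition n) (x y : Placement lam) :
    rcovers x y ↔ ((∃ i k : Fin n, SwitchMove y x i k) ∨ ∃ i : Fin n, PushMove y x i) := by
  refine ⟨fun ⟨hxy, hne, hmin⟩ => ?_, ?_⟩
  · obtain ⟨z, hmove, hxz⟩ := exists_move_of_rle hxy hne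
    have hzy : rle z y ∧ z ≠ y := by
      rcases hmove with ⟨i, k, h⟩ | ⟨i, h⟩
      exacts [⟨h.le, h.ne⟩, ⟨h.le, h.ne⟩]
    obtain rfl := (hmin z hxz hzy.1).resolve_right hzy.2
    exact hmove
  · rintro (⟨i, k, h⟩ | ⟨i, h⟩)
    exacts [h.rcovers, h.rcovers]

end RookPoset
end

section
/- Let λ be a partition and let i be a row with λ_i > i. The unique coatom of P_λ obtained by a move on the rook in row i of 1̂ is a push move if and only if there is no j > i with λ_j − j < λ_i − i; if such a j exists, this coatom is a switch move between rows i and j₀, where j₀ is the smallest j > i with λ_j − j < λ_i − i. -/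
namespace RookPoset

section GreedyAux

variable {n : ℕ} {lam : Partition n} {t : Placement lam}

/-- In the greedy placement, every column in `(t.col i, λ_i]` is occupied by a row below `i`. -/
lemma greedy_occ (ht : IsGreedy t) (i : Fin n) (m : ℕ) (h1 : t.col i < m)
    (h2 : m ≤ lam.part i) : ∃ r : Fin n, r < i ∧ t.col r = m := by
  by_contra h
  push_neg at h
  have hm1 : 1 ≤ m := le_trans (t.pos i) (le_of_lt h1)
  have := ht i m hm1 h2 (fun k hk => h k hk)
  omega

/-- Key counting lemma (A): if all GJW entries on `(i, j]` are at least `g_i`, the greedy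
rook of row `j` is strictly to the right of the rook of row `i`. -/
lemma greedy_colA (ht : IsGreedy t) (i j : Fin n) (hij : i < j)
    (hg : ∀ m : Fin n, i < m → m ≤ j →
      lam.part i - ((i : ℕ) + 1) ≤ lam.part m - ((m : ℕ) + 1)) :
    t.col i < t.col j := by
  by_contra hcon
  push_neg at hcon
  have hne : t.col j ≠ t.col i := fun h => absurd (t.inj h) (Fin.ne_of_gt hij)
  have hji : t.col j < t.col i := lt_of_le_of_ne hcon hne
  set A : Finset ℕ := Finset.Ioc (t.col i) (lam.part i) with hA
  set B : Finset ℕ := ((Finset.univ.filter fun r : Fin n => i ≤ r ∧ r < j)).image t.col with hB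
  have hsub : Finset.Icc (t.col i) (lam.part j) ⊆ A ∪ B := by
    intro d hd
    rw [Finset.mem_Icc] at hd
    have hr : ∃ r : Fin n, r < j ∧ t.col r = d := by
      rcases eq_or_lt_of_le hd.1 with h | h
      · exact ⟨i, hij, h⟩
      · exact greedy_occ ht j d (lt_trans hji h) hd.2
    obtain ⟨r, hrj, hrc⟩ := hr
    rcases lt_or_ge r i with hri | hri
    · apply Finset.mem_union_left
      rw [hA, Finset.mem_Ioc]
      refine ⟨lt_of_le_of_ne hd.1 ?_, ?_⟩
      · intro h
        exact absurd (t.inj (hrc.trans h.symm)) (Fin.ne_of_lt hri)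
      · calc d = t.col r := hrc.symm
          _ ≤ lam.part r := t.le_part r
          _ ≤ lam.part i := lam.mono (le_of_lt hri)
    · apply Finset.mem_union_right
      rw [hB, Finset.mem_image]
      refine ⟨r, ?_, hrc⟩
      simp only [Finset.mem_filter, Finset.mem_univ, true_and]
      exact ⟨hri, hrj⟩
  have hcard := Finset.card_le_card hsub
  have h1 : (Finset.Icc (t.col i) (lam.part j)).card = lam.part j + 1 - t.col i :=
    Nat.card_Icc _ _
  have h2 : A.card = lam.part i - t.col i := Nat.card_Ioc _ _
  have h3 : B.card ≤ (j : ℕ) - (i : ℕ) := by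
    have hb1 : B.card ≤ (Finset.univ.filter fun r : Fin n => i ≤ r ∧ r < j).card :=
      Finset.card_image_le
    have hb2 : (Finset.univ.filter fun r : Fin n => i ≤ r ∧ r < j).card =
        ((Finset.univ.filter fun r : Fin n => i ≤ r ∧ r < j).image Fin.val).card :=
      (Finset.card_image_of_injective _ Fin.val_injective).symm
    have hb3 : ((Finset.univ.filter fun r : Fin n => i ≤ r ∧ r < j).image Fin.val) ⊆
        Finset.Ico (i : ℕ) (j : ℕ) := by
      intro d hd
      simp only [Finset.mem_image, Finset.mem_filter, Finset.mem_univ, true_and] at hd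
      obtain ⟨r, ⟨ha, hb⟩, hcv⟩ := hd
      rw [Finset.mem_Ico]
      subst hcv
      exact ⟨ha, hb⟩
    have hb4 := Finset.card_le_card hb3
    rw [Nat.card_Ico] at hb4
    omega
  have hcu := Finset.card_union_le A B
  have hsi := lam.staircase i
  have hsj := lam.staircase j
  have hpi := t.le_part i
  have hmono : lam.part i ≤ lam.part j := lam.mono (le_of_lt hij)
  have hgj := hg j hij (le_refl j)
  have hvij : (i : ℕ) < (j : ℕ) := hij
  omega

/-- Rows strictly between `i` and the first smaller-GJW row `j₀` sit strictly right of `λ_i`. -/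
lemma greedy_col_mid_gt (ht : IsGreedy t) (i j₀ : Fin n)
    (hmin : ∀ m : Fin n, i < m → m < j₀ →
      lam.part i - ((i : ℕ) + 1) ≤ lam.part m - ((m : ℕ) + 1))
    {r : Fin n} (h1 : i < r) (h2 : r < j₀) : lam.part i < t.col r := by
  have hA := greedy_colA ht i r h1 (fun m hm1 hm2 => hmin m hm1 (lt_of_le_of_lt hm2 h2))
  by_contra h
  push_neg at h
  obtain ⟨r', hr', hc⟩ := greedy_occ ht i (t.col r) hA h
  have he := t.inj hc
  rw [he] at hr'
  exact absurd hr' (not_lt.mpr (le_of_lt h1))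

/-- Every column in `(t.col i, λ_{j₀}]` is occupied by a row below `j₀`. -/
lemma greedy_cover_Ioc (ht : IsGreedy t) (i j₀ : Fin n) (hij : i < j₀)
    (hlt : lam.part j₀ - ((j₀ : ℕ) + 1) < lam.part i - ((i : ℕ) + 1))
    (hmin : ∀ m : Fin n, i < m → m < j₀ →
      lam.part i - ((i : ℕ) + 1) ≤ lam.part m - ((m : ℕ) + 1))
    (d : ℕ) (hd1 : t.col i < d) (hd2 : d ≤ lam.part j₀) :
    ∃ r : Fin n, r < j₀ ∧ t.col r = d := by
  rcases le_or_gt d (lam.part i) with h | h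
  · obtain ⟨r, h1, h2⟩ := greedy_occ ht i d hd1 h
    exact ⟨r, lt_trans h1 hij, h2⟩
  · set R : Finset (Fin n) := Finset.univ.filter fun r : Fin n => i < r ∧ r < j₀ with hR
    have hRsub : R.image t.col ⊆ Finset.Ioc (lam.part i) (lam.part j₀) := by
      intro e he
      simp only [hR, Finset.mem_image, Finset.mem_filter, Finset.mem_univ, true_and] at he
      obtain ⟨r, ⟨h1, h2⟩, h3⟩ := he
      rw [Finset.mem_Ioc]
      constructor
      · rw [← h3]; exact greedy_col_mid_gt ht i j₀ hmin h1 h2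
      · rw [← h3]; exact le_trans (t.le_part r) (lam.mono (le_of_lt h2))
    have hval : R.image Fin.val = Finset.Ioo (i : ℕ) (j₀ : ℕ) := by
      ext d'
      simp only [hR, Finset.mem_image, Finset.mem_filter, Finset.mem_univ, true_and,
        Finset.mem_Ioo]
      constructor
      · rintro ⟨r, ⟨h1, h2⟩, rfl⟩
        exact ⟨h1, h2⟩
      · rintro ⟨h1, h2⟩
        refine ⟨⟨d', lt_trans h2 j₀.isLt⟩, ⟨?_, ?_⟩, rfl⟩
        · exact h1
        · exact h2
    have hcardR : R.card = (j₀ : ℕ) - (i : ℕ) - 1 := by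
      rw [← Finset.card_image_of_injective R Fin.val_injective, hval, Nat.card_Ioo]
    have himg : R.image t.col = Finset.Ioc (lam.part i) (lam.part j₀) := by
      apply Finset.eq_of_subset_of_card_le hRsub
      rw [Nat.card_Ioc, Finset.card_image_of_injective R t.inj, hcardR]
      have hsi := lam.staircase i
      have hsj := lam.staircase j₀
      have hvij : (i : ℕ) < (j₀ : ℕ) := hij
      omega
    have hdmem : d ∈ R.image t.col := by
      rw [himg, Finset.mem_Ioc]
      exact ⟨h, hd2⟩
    simp only [hR, Finset.mem_image, Finset.mem_filter, Finset.mem_univ, true_and] at hdmem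
    obtain ⟨r, ⟨h1, h2⟩, h3⟩ := hdmem
    exact ⟨r, h2, h3⟩

/-- (B): the greedy rook of the first smaller-GJW row `j₀` is strictly left of row `i`'s. -/
lemma greedy_colB (ht : IsGreedy t) (i j₀ : Fin n) (hij : i < j₀)
    (hlt : lam.part j₀ - ((j₀ : ℕ) + 1) < lam.part i - ((i : ℕ) + 1))
    (hmin : ∀ m : Fin n, i < m → m < j₀ →
      lam.part i - ((i : ℕ) + 1) ≤ lam.part m - ((m : ℕ) + 1)) :
    t.col j₀ < t.col i := by
  by_contra h
  push_neg at h
  have hne : t.col i ≠ t.col j₀ := fun e => absurd (t.inj e) (Fin.ne_of_lt hij)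
  have hlt2 : t.col i < t.col j₀ := lt_of_le_of_ne h hne
  obtain ⟨r, h1, h2⟩ := greedy_cover_Ioc ht i j₀ hij hlt hmin (t.col j₀) hlt2 (t.le_part j₀)
  exact absurd (t.inj h2) (Fin.ne_of_lt h1)

/-- (C): every column strictly between `t.col j₀` and `t.col i` is occupied by a row below
`i`. -/
lemma greedy_colC (ht : IsGreedy t) (i j₀ : Fin n) (hij : i < j₀)
    (hlt : lam.part j₀ - ((j₀ : ℕ) + 1) < lam.part i - ((i : ℕ) + 1))
    (hmin : ∀ m : Fin n, i < m → m < j₀ →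
      lam.part i - ((i : ℕ) + 1) ≤ lam.part m - ((m : ℕ) + 1))
    (d : ℕ) (h1 : t.col j₀ < d) (h2 : d < t.col i) :
    ∃ r : Fin n, r < i ∧ t.col r = d := by
  have hd : d ≤ lam.part j₀ :=
    le_trans (le_of_lt (lt_of_lt_of_le h2 (t.le_part i))) (lam.mono (le_of_lt hij))
  obtain ⟨r, hr, hc⟩ := greedy_occ ht j₀ d h1 hd
  rcases lt_trichotomy r i with h | h | h
  · exact ⟨r, h, hc⟩
  · exfalso
    rw [h] at hc
    omega
  · exfalso
    have := greedy_col_mid_gt ht i j₀ hmin h hr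
    have := t.le_part i
    omega

/-- If some later GJW entry is smaller, no push move on row `i` is possible from greedy. -/
lemma greedy_noPush (ht : IsGreedy t) (i j₀ : Fin n) (hij : i < j₀)
    (hlt : lam.part j₀ - ((j₀ : ℕ) + 1) < lam.part i - ((i : ℕ) + 1))
    (hmin : ∀ m : Fin n, i < m → m < j₀ →
      lam.part i - ((i : ℕ) + 1) ≤ lam.part m - ((m : ℕ) + 1))
    (c : Placement lam) : ¬ PushMove t c i := by
  rintro ⟨cc, hc1, hc2, hc3, hc4, hc5, hc6⟩
  have hB := greedy_colB ht i j₀ hij hlt hmin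
  rcases lt_trichotomy cc (t.col j₀) with h | h | h
  · obtain ⟨r, hr, he⟩ := hc4 (t.col j₀) h hB
    have := t.inj he
    rw [this] at hr
    exact absurd hij (not_lt.mpr (le_of_lt hr))
  · exact hc3 j₀ h.symm
  · obtain ⟨r, hr, he⟩ := greedy_colC ht i j₀ hij hlt hmin cc h hc2
    exact hc3 r he

/-- If some first later GJW entry `j₀` is smaller, a switch move on row `i` from greedy must
have its second row equal to `j₀`. -/
lemma greedy_switchEq (ht : IsGreedy t) (i j₀ k : Fin n) (hij : i < j₀)
    (hlt : lam.part j₀ - ((j₀ : ℕ) + 1) < lam.part i - ((i : ℕ) + 1))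
    (hmin : ∀ m : Fin n, i < m → m < j₀ →
      lam.part i - ((i : ℕ) + 1) ≤ lam.part m - ((m : ℕ) + 1))
    (c : Placement lam) (hs : SwitchMove t c i k) : k = j₀ := by
  obtain ⟨hik, hki, hrect, -⟩ := hs
  have hB := greedy_colB ht i j₀ hij hlt hmin
  rcases lt_trichotomy k j₀ with h | h | h
  · exfalso
    have := greedy_colA ht i k hik (fun m hm1 hm2 => hmin m hm1 (lt_of_le_of_lt hm2 h))
    omega
  · exact h
  · exfalso
    have hkj : t.col k < t.col j₀ := by
      rcases lt_trichotomy (t.col k) (t.col j₀) with h' | h' | h'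
      · exact h'
      · exact absurd (t.inj h') (Fin.ne_of_gt h)
      · exfalso
        obtain ⟨r, hr, he⟩ := greedy_colC ht i j₀ hij hlt hmin (t.col k) h' hki
        have := t.inj he
        rw [this] at hr
        exact absurd hr (not_lt.mpr (le_of_lt (lt_trans hij h)))
    rcases hrect j₀ (le_of_lt hij) (le_of_lt h) (le_of_lt hkj) (le_of_lt hB) with e | e
    · exact absurd e (Fin.ne_of_gt hij)
    · exact absurd e (Fin.ne_of_lt h)

end GreedyAux

/-- The coatom of row `i` is a push move iff no later GJW entry is smaller
than the `i`-th one; if a later entry is smaller, the coatom is a switch move between row `i`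
and the first such row. -/
theorem coatom_push_or_switch {n : ℕ} (lam : Partition n) (t c : Placement lam)
    (ht : IsGreedy t) (i : Fin n) (hi : (i : ℕ) + 1 < lam.part i) (hc : MoveOnRow t c i) :
    (PushMove t c i ↔
      ∀ j : Fin n, i < j → lam.part i - ((i : ℕ) + 1) ≤ lam.part j - ((j : ℕ) + 1)) ∧
    (∀ j₀ : Fin n, i < j₀ → lam.part j₀ - ((j₀ : ℕ) + 1) < lam.part i - ((i : ℕ) + 1) →
      (∀ j : Fin n, i < j → j < j₀ →
        lam.part i - ((i : ℕ) + 1) ≤ lam.part j - ((j : ℕ) + 1)) →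
      SwitchMove t c i j₀) := by
  classical
  constructor
  · constructor
    · intro hp
      by_contra hcon
      push_neg at hcon
      obtain ⟨j, hj1, hj2⟩ := hcon
      set S : Finset (Fin n) := Finset.univ.filter fun j' : Fin n =>
        i < j' ∧ lam.part j' - ((j' : ℕ) + 1) < lam.part i - ((i : ℕ) + 1) with hS
      have hSne : S.Nonempty := ⟨j, by
        simp only [hS, Finset.mem_filter, Finset.mem_univ, true_and]
        exact ⟨hj1, hj2⟩⟩
      set j₀ : Fin n := S.min' hSne with hj₀def
      obtain ⟨-, hij₀, hlt₀⟩ := Finset.mem_filter.mp (S.min'_mem hSne)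
      have hmin : ∀ m : Fin n, i < m → m < j₀ →
          lam.part i - ((i : ℕ) + 1) ≤ lam.part m - ((m : ℕ) + 1) := by
        intro m h1 h2
        by_contra hx
        push_neg at hx
        have hmS : m ∈ S := by
          rw [hS, Finset.mem_filter]
          exact ⟨Finset.mem_univ m, h1, hx⟩
        exact absurd (S.min'_le m hmS) (not_le.mpr h2)
      exact greedy_noPush ht i j₀ hij₀ hlt₀ hmin c hp
    · intro hcond
      rcases hc with ⟨k, hs⟩ | hp
      · exfalso
        have := greedy_colA ht i k hs.1 (fun m hm1 _ => hcond m hm1)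
        have := hs.2.1
        omega
      · exact hp
  · intro j₀ h1 h2 h3
    rcases hc with ⟨k, hs⟩ | hp
    · have hk := greedy_switchEq ht i j₀ k h1 h2 h3 c hs
      rw [hk] at hs
      exact hs
    · exact absurd hp (greedy_noPush ht i j₀ h1 h2 h3 c)

end RookPoset
end

section
/- Let λ be a partition, let c be the coatom of row i of P_λ, and let X_{{c}} = {x ∈ P_λ : x ≰ c′ for every coatom c′ ≠ c}. Then X_{{c}} is totally ordered by the rook poset order; it has exactly 2 elements if c arises from a switch move, and exactly λ_i − i + 1 elements (a chain of length λ_i − i) if c arises from a push move. -/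
namespace RookPoset

/-!
Write `rookCount x J m` for the number of rooks of `x` in rows `< J` and columns `≥ m`. Then
`x ≤ y` iff `rookCount x ≤ rookCount y` pointwise, and the greedy placement `t` maximises every
`rookCount`. The coatoms are the placements `coatomAt t j g`: the rook of row `j` moves to the
largest column `g < t_j` left free by the lower rows, trading places with the rook in column `g`
if there is one. An element `z` lies below the coatom of row `j` iff
`rookCount z (j + 1) t_j < rookCount t (j + 1) t_j`, which already holds when `z_j < t_j`. Hence
every `z ∈ X_{c}`, `c` the coatom of row `i`, has `z_j ≥ t_j` for all `j ≠ i`, and the greedy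
property turns this into: for a push move, `z` agrees with `t` outside row `i`, a chain indexed by
the `λ_i - i` columns available to that rook; for a switch move with row `k`, `z ∈ {t, c}`.
-/

open Finset

theorem _root_.List.forall₂_le_iff_countP_le : ∀ {l₁ l₂ : List ℕ},
    l₁.Pairwise (· ≤ ·) → l₂.Pairwise (· ≤ ·) → l₁.length = l₂.length →
    (List.Forall₂ (· ≤ ·) l₁ l₂ ↔ ∀ m, l₁.countP (m ≤ ·) ≤ l₂.countP (m ≤ ·))
  | [], [], _, _, _ => by simp
  | [], _ :: _, _, _, h | _ :: _, [], _, _, h => by simp at h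
  | a :: l₁, b :: l₂, h₁, h₂, hlen => by
    rw [List.pairwise_cons] at h₁ h₂
    simp only [List.length_cons, Nat.add_right_cancel_iff] at hlen
    rw [List.forall₂_cons, List.forall₂_le_iff_countP_le h₁.2 h₂.2 hlen]
    simp only [List.countP_cons, decide_eq_true_eq]
    constructor
    · rintro ⟨hab, h⟩ m
      have := h m
      split_ifs <;> omega
    · intro h
      have hl₁ m := List.countP_le_length (p := fun x => decide (m ≤ x)) (l := l₁)
      have hl₂ m := List.countP_le_length (p := fun x => decide (m ≤ x)) (l := l₂)
      -- every entry of `a :: l₁` is at least `a`, so the count at `a` forces `a ≤ b`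
      have hab : a ≤ b := by
        have ha := h a
        have : l₁.countP (a ≤ ·) = l₁.length := List.countP_eq_length.mpr (by simpa using h₁.1)
        have := hl₂ a
        split_ifs at ha <;> omega
      refine ⟨hab, fun m => ?_⟩
      have hm := h m
      by_cases hmb : m ≤ b
      · have : l₂.countP (m ≤ ·) = l₂.length :=
          List.countP_eq_length.mpr fun x hx => by simpa using hmb.trans (h₂.1 x hx)
        have := hl₁ m
        split_ifs at hm <;> omega
      · split_ifs at hm <;> omega

variable {n : ℕ} {lam : Partition n} {t c : Placement lam} {i j k : Fin n} {g : ℕ}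

attribute [ext] Placement

def rookCount (x : Fin n → ℕ) (J m : ℕ) : ℕ :=
  #{r : Fin n | (r : ℕ) < J ∧ m ≤ x r}

theorem countP_initSeg_s12 {x : Fin n → ℕ} (hx : Function.Injective x) (J m : ℕ) :
    (initSeg x J).countP (m ≤ ·) = rookCount x J m := by
  rw [initSeg, (Finset.sort_perm_toList _ _).countP_eq, ← Multiset.coe_countP,
    Finset.coe_toList, Multiset.countP_eq_card_filter, ← Finset.filter_val, Finset.card_val,
    Finset.filter_image, Finset.card_image_of_injective _ hx, Finset.filter_filter]
  rfl

theorem rle_iff_rookCount_le {x y : Placement lam} :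
    rle x y ↔ ∀ J m, rookCount x.col J m ≤ rookCount y.col J m := by
  refine forall_congr' fun J => ?_
  have hlen : (initSeg x.col J).length = (initSeg y.col J).length := by
    simp [initSeg, card_image_of_injective _ x.inj, card_image_of_injective _ y.inj]
  rw [List.forall₂_le_iff_countP_le (l₁ := initSeg x.col J) (l₂ := initSeg y.col J)
    (pairwise_sort _ _) (pairwise_sort _ _) hlen]
  simp only [countP_initSeg_s12 x.inj, countP_initSeg_s12 y.inj]

theorem rookCount_le_rookCount {x y : Fin n → ℕ} {J m : ℕ}
    (h : ∀ r : Fin n, (r : ℕ) < J → m ≤ x r → m ≤ y r) : rookCount x J m ≤ rookCount y J m :=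
  card_le_card fun r hr => by
    simp only [mem_filter, mem_univ, true_and] at hr ⊢
    exact ⟨hr.1, h r hr.1 hr.2⟩

theorem rle_of_forall_col_le {x y : Placement lam} (h : ∀ r, x.col r ≤ y.col r) : rle x y :=
  rle_iff_rookCount_le.mpr fun _ _ => rookCount_le_rookCount fun r _ hr => hr.trans (h r)

theorem rookCount_succ (x : Fin n → ℕ) (q : Fin n) (m : ℕ) :
    rookCount x (q + 1) m = rookCount x q m + if m ≤ x q then 1 else 0 := by
  have : univ.filter (fun r : Fin n => (r : ℕ) < q + 1 ∧ m ≤ x r) =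
      univ.filter (fun r : Fin n => (r : ℕ) < q ∧ m ≤ x r) ∪
        univ.filter (fun r : Fin n => r = q ∧ m ≤ x r) := by
    ext r; simp only [mem_filter, mem_univ, true_and, mem_union, Fin.ext_iff]; omega
  have hq : #{r : Fin n | r = q ∧ m ≤ x r} = if m ≤ x q then 1 else 0 := by
    rw [← filter_filter, filter_eq', if_pos (mem_univ q), filter_singleton]
    split_ifs <;> rfl
  rw [rookCount, rookCount, this, card_union_of_disjoint, hq]
  exact disjoint_filter.2 fun r _ h₁ h₂ => by rw [h₂.1] at h₁; omega

theorem rle_refl (x : Placement lam) : rle x x :=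
  rle_iff_rookCount_le.mpr fun _ _ => le_rfl

theorem rle_trans {x y z : Placement lam} (hxy : rle x y) (hyz : rle y z) : rle x z :=
  rle_iff_rookCount_le.mpr fun J m =>
    (rle_iff_rookCount_le.mp hxy J m).trans (rle_iff_rookCount_le.mp hyz J m)

theorem rle_antisymm {x y : Placement lam} (hxy : rle x y) (hyx : rle y x) : x = y := by
  have h J m := (rle_iff_rookCount_le.mp hxy J m).antisymm (rle_iff_rookCount_le.mp hyx J m)
  ext r
  have key m : m ≤ x.col r ↔ m ≤ y.col r := by
    have := h (r + 1) m
    rw [rookCount_succ, rookCount_succ, h r m] at this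
    split_ifs at this <;> constructor <;> intro <;> omega
  exact le_antisymm ((key _).mp le_rfl) ((key _).mpr le_rfl)

theorem rookCount_comp_perm (y : Fin n → ℕ) (π : Equiv.Perm (Fin n)) {J : ℕ}
    (hπ : ∀ r, (π r : ℕ) < J ↔ (r : ℕ) < J) (m : ℕ) :
    rookCount (y ∘ π) J m = rookCount y J m :=
  card_equiv π fun r => by simp [hπ]

theorem rookCount_le_add_sub {x : Fin n → ℕ} (hx : Function.Injective x) (J m m' : ℕ) :
    rookCount x J m ≤ rookCount x J m' + (m' - m) := by
  have hIco : #{r : Fin n | (r : ℕ) < J ∧ x r ∈ Ico m m'} ≤ m' - m := by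
    rw [← Nat.card_Ico]
    exact card_le_card_of_injOn x (fun r hr => by simp_all) hx.injOn
  calc rookCount x J m
      ≤ #(univ.filter (fun r : Fin n => (r : ℕ) < J ∧ m' ≤ x r) ∪
          univ.filter (fun r : Fin n => (r : ℕ) < J ∧ x r ∈ Ico m m')) :=
        card_le_card fun r hr => by
          simp only [mem_filter, mem_univ, true_and, mem_union, mem_Ico] at hr ⊢
          omega
    _ ≤ _ := (card_union_le _ _).trans (Nat.add_le_add_left hIco _)

theorem rookCount_add_sub_le {y : Fin n → ℕ} {J m m' : ℕ} (hmm' : m ≤ m')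
    (hcover : ∀ v, m ≤ v → v < m' → ∃ r : Fin n, (r : ℕ) < J ∧ y r = v) :
    rookCount y J m' + (m' - m) ≤ rookCount y J m := by
  have hIco : m' - m ≤ #{r : Fin n | (r : ℕ) < J ∧ y r ∈ Ico m m'} := by
    rw [← Nat.card_Ico]
    refine (card_le_card (t := image y {r : Fin n | (r : ℕ) < J ∧ y r ∈ Ico m m'})
      fun v hv => ?_).trans card_image_le
    obtain ⟨r, hr, rfl⟩ := hcover v (mem_Ico.mp hv).1 (mem_Ico.mp hv).2
    exact mem_image_of_mem y (by simpa [hr] using hv)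
  calc rookCount y J m' + (m' - m)
      ≤ #(univ.filter (fun r : Fin n => (r : ℕ) < J ∧ m' ≤ y r) ∪
          univ.filter (fun r : Fin n => (r : ℕ) < J ∧ y r ∈ Ico m m')) := by
        rw [card_union_of_disjoint (disjoint_filter.2 fun r _ h₁ h₂ => by simp at h₂; omega)]
        exact Nat.add_le_add_left hIco _
    _ ≤ rookCount y J m := card_le_card fun r hr => by
        simp only [mem_filter, mem_univ, true_and, mem_union, mem_Ico] at hr ⊢
        omega

theorem rookCount_eq_add_card {x : Fin n → ℕ} {j J : ℕ} (hjJ : j ≤ J) (m : ℕ) :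
    rookCount x J m = rookCount x j m + #{r : Fin n | j ≤ r ∧ (r : ℕ) < J ∧ m ≤ x r} := by
  rw [rookCount, rookCount, ← card_union_of_disjoint]
  · congr 1; ext r; simp only [mem_filter, mem_univ, true_and, mem_union]; omega
  · exact disjoint_filter.2 fun r _ h₁ h₂ => by omega

theorem rookCount_add_le_add (x : Fin n → ℕ) {y : Fin n → ℕ} {j J m : ℕ} (hjJ : j ≤ J)
    (hy : ∀ r : Fin n, j ≤ r → (r : ℕ) < J → m ≤ y r) :
    rookCount x J m + rookCount y j m ≤ rookCount y J m + rookCount x j m := by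
  rw [rookCount_eq_add_card hjJ, rookCount_eq_add_card (x := y) hjJ]
  have : #{r : Fin n | j ≤ r ∧ (r : ℕ) < J ∧ m ≤ x r} ≤
      #{r : Fin n | j ≤ r ∧ (r : ℕ) < J ∧ m ≤ y r} :=
    card_le_card fun r hr => by
      simp only [mem_filter, mem_univ, true_and] at hr ⊢
      exact ⟨hr.1, hr.2.1, hy r hr.1 hr.2.1⟩
  omega

theorem IsGreedy.exists_lt_col_eq (ht : IsGreedy t) {r : Fin n} {v : ℕ} (hv : 1 ≤ v)
    (hvr : v ≤ lam.part r) (hlt : t.col r < v) : ∃ q < r, t.col q = v := by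
  by_contra! h
  exact (ht r v hv hvr h).not_gt hlt

theorem IsGreedy.rookCount_le (ht : IsGreedy t) (x : Placement lam) (J m : ℕ) :
    rookCount x.col J m ≤ rookCount t.col J m := by
  induction J with
  | zero => simp [rookCount]
  | succ J ih =>
    by_cases hJ : J < n
    swap
    · have h (y : Fin n → ℕ) : rookCount y (J + 1) m = rookCount y J m := by
        unfold rookCount; congr 1; ext r; simp only [mem_filter, mem_univ, true_and]; omega
      rw [h, h]; exact ih
    obtain ⟨r, rfl⟩ : ∃ r : Fin n, (r : ℕ) = J := ⟨⟨J, hJ⟩, rfl⟩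
    have hsx := rookCount_succ x.col r m
    have hst := rookCount_succ t.col r m
    by_cases hm : m ≤ t.col r
    · rw [if_pos hm] at hst
      split_ifs at hsx <;> omega
    -- greedy fills every column in `[m, λ_r]` with a row `≤ r`, and these are the only
    -- columns `≥ m` available to the rows `≤ r` of `x`
    have hx : rookCount x.col (r + 1) m ≤ lam.part r + 1 - m := by
      have h0 : rookCount x.col (r + 1) (lam.part r + 1) = 0 :=
        card_eq_zero.2 <| filter_eq_empty_iff.2 fun q _ hq => by
          have := (x.le_part q).trans (lam.mono (show q ≤ r by omega))
          omega
      have := rookCount_le_add_sub x.inj (r + 1) m (lam.part r + 1)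
      omega
    rcases le_or_gt m (lam.part r + 1) with hmle | hmle
    · refine hx.trans (le_add_self.trans (rookCount_add_sub_le hmle fun v hv₁ hv₂ => ?_))
      obtain ⟨q, hq, rfl⟩ := ht.exists_lt_col_eq (by have := t.pos r; omega) (by omega)
        (by omega : t.col r < v)
      exact ⟨q, by omega, rfl⟩
    · omega

theorem IsGreedy.rle_top (ht : IsGreedy t) (x : Placement lam) : rle x t :=
  rle_iff_rookCount_le.mpr (ht.rookCount_le x)

theorem IsGreedy.exists_col_lt_of_ne (ht : IsGreedy t) {z : Placement lam} (hz : z ≠ t) :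
    ∃ j, z.col j < t.col j := by
  by_contra! h
  exact hz (rle_antisymm (ht.rle_top z) (rle_of_forall_col_le h))

theorem IsGreedy.rookCount_lt_of_forall_le (ht : IsGreedy t) {z : Placement lam} {a : Fin n}
    (haj : a ≤ j) (hwin : ∀ r, a ≤ r → r ≤ j → t.col j ≤ t.col r) (hza : z.col a < t.col j) :
    rookCount z.col (j + 1) (t.col j) < rookCount t.col (j + 1) (t.col j) := by
  -- below row `a` greedy wins, in row `a` only `t` counts, and above it `t` counts in every row
  have htail := rookCount_add_le_add z.col (j := a + 1) (J := j + 1) (m := t.col j)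
    (by omega) fun r h₁ h₂ => hwin r (by omega) (by omega)
  have hst := rookCount_succ t.col a (t.col j)
  have hsz := rookCount_succ z.col a (t.col j)
  rw [if_pos (hwin a le_rfl haj)] at hst
  rw [if_neg (by omega)] at hsz
  have := ht.rookCount_le z a (t.col j)
  omega

structure IsLargestFreeCol (t : Placement lam) (j : Fin n) (g : ℕ) : Prop where
  one_le : 1 ≤ g
  lt_col : g < t.col j
  free : ∀ q < j, t.col q ≠ g
  occupied : ∀ v, g < v → v < t.col j → ∃ q < j, t.col q = v

theorem IsLargestFreeCol.unique (hg : IsLargestFreeCol t j g) {g' : ℕ}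
    (hg' : IsLargestFreeCol t j g') : g = g' := by
  by_contra hne
  rcases Nat.lt_or_gt_of_ne hne with h | h
  · obtain ⟨q, hq, hqg⟩ := hg.occupied g' h hg'.lt_col
    exact hg'.free q hq hqg
  · obtain ⟨q, hq, hqg⟩ := hg'.occupied g h hg.lt_col
    exact hg.free q hq hqg

theorem exists_isLargestFreeCol (h : ∃ v, 1 ≤ v ∧ v < t.col j ∧ ∀ q < j, t.col q ≠ v) :
    ∃ g, IsLargestFreeCol t j g := by
  classical
  obtain ⟨v, hv₁, hv₂, hv₃⟩ := h
  let P v := 1 ≤ v ∧ ∀ q < j, t.col q ≠ v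
  have hP : P (Nat.findGreatest P (t.col j - 1)) := Nat.findGreatest_spec (by omega) ⟨hv₁, hv₃⟩
  have hle := Nat.findGreatest_le (P := P) (t.col j - 1)
  refine ⟨_, hP.1, by omega, hP.2, fun w hw₁ hw₂ => ?_⟩
  by_contra! hw
  exact Nat.findGreatest_is_greatest hw₁ (by omega) ⟨by omega, hw⟩

theorem IsGreedy.col_lt_col_of_isLargestFreeCol (ht : IsGreedy t) (hg : IsLargestFreeCol t j g)
    {r : Fin n} (hjr : j < r) (hfree : ∀ q ≤ r, t.col q ≠ g) : t.col j < t.col r := by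
  obtain ⟨hg₁, hgj, -, hbetween⟩ := hg
  by_contra! hrj
  rcases lt_trichotomy (t.col r) g with hrg | hrg | hrg
  · obtain ⟨q, hq, hqg⟩ := ht.exists_lt_col_eq hg₁
      ((hgj.le.trans (t.le_part j)).trans (lam.mono hjr.le)) hrg
    exact hfree q hq.le hqg
  · exact hfree r le_rfl hrg
  · obtain ⟨q, hq, hqr⟩ := hbetween _ hrg (lt_of_le_of_ne hrj fun h => hjr.ne (t.inj h).symm)
    exact (hq.trans hjr).ne (t.inj hqr)

/-- The coatom of row `j`: composing with the transposition of the columns `g` and `t.col j`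
is a push move of the rook of row `j` if column `g` is empty, and a switch move with the rook in
column `g` otherwise. -/
def coatomAt (t : Placement lam) (j : Fin n) (g : ℕ) (hg : IsLargestFreeCol t j g) :
    Placement lam where
  col r := Equiv.swap g (t.col j) (t.col r)
  inj := (Equiv.injective _).comp t.inj
  pos r := by
    rw [Equiv.swap_apply_def]
    split_ifs
    · exact t.pos j
    · exact hg.one_le
    · exact t.pos r
  le_part r := by
    rw [Equiv.swap_apply_def]
    split_ifs with h₁ h₂
    · have hjr : j < r := lt_of_le_of_ne (not_lt.mp fun h => hg.free r h h₁)
        fun h => hg.lt_col.ne (h ▸ h₁).symm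
      exact (t.le_part j).trans (lam.mono hjr.le)
    · exact hg.lt_col.le.trans (t.inj h₂ ▸ t.le_part r)
    · exact t.le_part r

theorem coatomAt_col_self (hg : IsLargestFreeCol t j g) : (coatomAt t j g hg).col j = g :=
  Equiv.swap_apply_right _ _

theorem coatomAt_col_of_ne (hg : IsLargestFreeCol t j g) {r : Fin n} (hr : r ≠ j)
    (hrg : t.col r ≠ g) : (coatomAt t j g hg).col r = t.col r :=
  Equiv.swap_apply_of_ne_of_ne hrg fun h => hr (t.inj h)

theorem coatomAt_ne (hg : IsLargestFreeCol t j g) : coatomAt t j g hg ≠ t := fun h =>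
  hg.lt_col.ne (by rw [← coatomAt_col_self hg, h])

theorem rookCount_le_rookCount_coatomAt_add_one (hg : IsLargestFreeCol t j g) (J m : ℕ) :
    rookCount t.col J m ≤ rookCount (coatomAt t j g hg).col J m + 1 := by
  refine (card_le_card fun r hr => ?_).trans (card_insert_le j _)
  by_cases hrj : r = j
  · rw [hrj]
    exact mem_insert_self _ _
  simp only [mem_filter, mem_univ, true_and, mem_insert] at hr ⊢
  refine Or.inr ⟨hr.1, ?_⟩
  by_cases hrg : t.col r = g
  · have : (coatomAt t j g hg).col r = t.col j := by
      simp only [coatomAt, hrg, Equiv.swap_apply_left]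
    have := hg.lt_col
    omega
  · rw [coatomAt_col_of_ne hg hrj hrg]
    exact hr.2

theorem rookCount_le_rookCount_coatomAt (hg : IsLargestFreeCol t j g) {J m : ℕ}
    (hwin : ¬ ((j : ℕ) < J ∧ g < m ∧ m ≤ t.col j ∧ ∀ r : Fin n, (r : ℕ) < J → t.col r ≠ g)) :
    rookCount t.col J m ≤ rookCount (coatomAt t j g hg).col J m := by
  by_cases hk : ∃ k : Fin n, (k : ℕ) < J ∧ t.col k = g
  · obtain ⟨k, hkJ, rfl⟩ := hk
    have hjk : j < k := lt_of_le_of_ne (not_lt.mp fun h => hg.free k h rfl)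
      fun h => hg.lt_col.ne (h ▸ rfl)
    have hcol : (coatomAt t j (t.col k) hg).col = t.col ∘ Equiv.swap k j := funext fun r =>
      t.inj.swap_apply k j r
    rw [hcol, rookCount_comp_perm]
    intro r
    rcases eq_or_ne r k with rfl | hrk
    · simp only [Equiv.swap_apply_left]; omega
    rcases eq_or_ne r j with rfl | hrj
    · simp only [Equiv.swap_apply_right]; omega
    · rw [Equiv.swap_apply_of_ne_of_ne hrk hrj]
  · push Not at hk
    refine rookCount_le_rookCount fun r hrJ hmr => ?_
    by_cases hrj : r = j
    · subst hrj
      rw [coatomAt_col_self]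
      by_contra hgm
      exact hwin ⟨hrJ, by omega, hmr, hk⟩
    · rwa [coatomAt_col_of_ne hg hrj (hk r hrJ)]


theorem IsGreedy.rookCount_lt_of_col_lt (ht : IsGreedy t) {z : Placement lam}
    (h : z.col j < t.col j) :
    rookCount z.col (j + 1) (t.col j) < rookCount t.col (j + 1) (t.col j) :=
  ht.rookCount_lt_of_forall_le le_rfl (fun _ h₁ h₂ => (le_antisymm h₂ h₁).symm ▸ le_rfl) h

theorem exists_isLargestFreeCol_of_rookCount_lt {z : Placement lam}
    (hz : rookCount z.col (j + 1) (t.col j) < rookCount t.col (j + 1) (t.col j)) :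
    ∃ g, IsLargestFreeCol t j g := by
  refine exists_isLargestFreeCol ?_
  by_contra! hcover
  -- all columns left of `t.col j` are taken by lower rows of `t`, so no `z` can do better
  have hz₁ := rookCount_le_add_sub z.inj (j + 1) 1 (t.col j)
  have ht₁ := rookCount_add_sub_le (J := j + 1) (t.pos j) fun v hv₁ hv₂ => by
    obtain ⟨q, hq, hqv⟩ := hcover v hv₁ hv₂
    exact ⟨q, by omega, hqv⟩
  have := rookCount_le_rookCount (x := t.col) (y := z.col) (J := j + 1) (m := 1)
    fun r _ _ => z.pos r
  omega

theorem IsGreedy.rle_coatomAt_iff (ht : IsGreedy t) (hg : IsLargestFreeCol t j g)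
    {z : Placement lam} :
    rle z (coatomAt t j g hg) ↔
      rookCount z.col (j + 1) (t.col j) < rookCount t.col (j + 1) (t.col j) := by
  constructor
  · intro h
    exact (rle_iff_rookCount_le.mp h _ _).trans_lt
      (ht.rookCount_lt_of_col_lt ((coatomAt_col_self hg).symm ▸ hg.lt_col))
  intro hz
  refine rle_iff_rookCount_le.mpr fun J m => ?_
  by_cases hwin : (j : ℕ) < J ∧ g < m ∧ m ≤ t.col j ∧ ∀ r : Fin n, (r : ℕ) < J → t.col r ≠ g
  swap
  · exact (ht.rookCount_le z J m).trans (rookCount_le_rookCount_coatomAt hg hwin)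
  obtain ⟨hjJ, hgm, hmj, hfree⟩ := hwin
  -- `hz` spreads from `t.col j` to every `m ∈ (g, t.col j]` because `t` fills `[m, t.col j)`
  -- below row `j`, and the rows `j < r < J` of `t` all lie right of `t.col j`
  have hz₁ := rookCount_le_add_sub z.inj (j + 1) m (t.col j)
  have ht₁ := rookCount_add_sub_le (J := j + 1) hmj fun v hv₁ hv₂ => by
    obtain ⟨q, hq, hqv⟩ := hg.occupied v (by omega) hv₂
    exact ⟨q, by omega, hqv⟩
  have htail := rookCount_add_le_add z.col (j := j + 1) (J := J) (y := t.col) (m := m)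
    (by omega) fun r h₁ h₂ =>
      hmj.trans (ht.col_lt_col_of_isLargestFreeCol hg (by omega) fun q hq => hfree q (by omega)).le
  have := rookCount_le_rookCount_coatomAt_add_one hg J m
  omega

theorem IsGreedy.rookCount_le_rookCount_coatomAt_of_ne (ht : IsGreedy t)
    (hg : IsLargestFreeCol t j g) {j' : Fin n} (hj' : j' ≠ j) :
    rookCount t.col (j' + 1) (t.col j') ≤ rookCount (coatomAt t j g hg).col (j' + 1) (t.col j') :=
  rookCount_le_rookCount_coatomAt hg fun ⟨hjj', _, hj'j, hfree⟩ =>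
    (ht.col_lt_col_of_isLargestFreeCol hg (lt_of_le_of_ne (by omega) hj'.symm)
      fun q hq => hfree q (by omega)).not_ge hj'j

theorem IsGreedy.rcovers_coatomAt (ht : IsGreedy t) (hg : IsLargestFreeCol t j g) :
    rcovers (coatomAt t j g hg) t := by
  refine ⟨ht.rle_top _, coatomAt_ne hg, fun w hcw _ => ?_⟩
  by_cases hw : w = t
  · exact Or.inr hw
  obtain ⟨j', hj'⟩ := ht.exists_col_lt_of_ne hw
  have hD := ht.rookCount_lt_of_col_lt hj'
  obtain ⟨g', hg'⟩ := exists_isLargestFreeCol_of_rookCount_lt hD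
  have hwc' := (ht.rle_coatomAt_iff hg').mpr hD
  by_cases hjj : j' = j
  · subst hjj
    obtain rfl := hg.unique hg'
    exact Or.inl (rle_antisymm hwc' hcw)
  · have := (ht.rle_coatomAt_iff hg').mp (rle_trans hcw hwc')
    exact absurd (ht.rookCount_le_rookCount_coatomAt_of_ne hg hjj) this.not_ge

theorem IsGreedy.exists_eq_coatomAt (ht : IsGreedy t) (hc : rcovers c t) :
    ∃ j g, ∃ hg : IsLargestFreeCol t j g, c = coatomAt t j g hg := by
  obtain ⟨j, hj⟩ := ht.exists_col_lt_of_ne hc.2.1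
  have hD := ht.rookCount_lt_of_col_lt hj
  obtain ⟨g, hg⟩ := exists_isLargestFreeCol_of_rookCount_lt hD
  refine ⟨j, g, hg, ?_⟩
  rcases hc.2.2 _ ((ht.rle_coatomAt_iff hg).mpr hD) (ht.rle_top _) with h | h
  · exact h.symm
  · exact absurd h (coatomAt_ne hg)

theorem IsGreedy.mem_Xset_coatomAt_iff (ht : IsGreedy t) (hg : IsLargestFreeCol t i g)
    {z : Placement lam} :
    z ∈ Xset t {coatomAt t i g hg} ↔
      ∀ j ≠ i, rookCount t.col (j + 1) (t.col j) ≤ rookCount z.col (j + 1) (t.col j) := by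
  simp only [Xset, Set.mem_ofPred_eq, Set.mem_singleton_iff]
  constructor
  · intro hz j hji
    by_contra! hD
    obtain ⟨g', hg'⟩ := exists_isLargestFreeCol_of_rookCount_lt hD
    refine hz _ (ht.rcovers_coatomAt hg') (fun heq => ?_) ((ht.rle_coatomAt_iff hg').mpr hD)
    have := (ht.rle_coatomAt_iff hg').mp (rle_refl _)
    rw [heq] at this
    exact (ht.rookCount_le_rookCount_coatomAt_of_ne hg hji).not_gt this
  · intro h c' hc' hne hzc'
    obtain ⟨j, g', hg', rfl⟩ := ht.exists_eq_coatomAt hc'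
    by_cases hji : j = i
    · subst hji
      obtain rfl := hg.unique hg'
      exact hne rfl
    · exact (h j hji).not_gt ((ht.rle_coatomAt_iff hg').mp hzc')

theorem IsGreedy.col_le_of_mem_Xset (ht : IsGreedy t) (hg : IsLargestFreeCol t i g)
    {z : Placement lam} (hz : z ∈ Xset t {coatomAt t i g hg}) {j : Fin n} (hji : j ≠ i) :
    t.col j ≤ z.col j := by
  by_contra! h
  exact ((ht.mem_Xset_coatomAt_iff hg).mp hz j hji).not_gt (ht.rookCount_lt_of_col_lt h)

theorem IsGreedy.col_lt_of_mem_Xset (ht : IsGreedy t) (hg : IsLargestFreeCol t i g)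
    {z : Placement lam} (hz : z ∈ Xset t {coatomAt t i g hg}) (hzt : z ≠ t) :
    z.col i < t.col i := by
  obtain ⟨j, hj⟩ := ht.exists_col_lt_of_ne hzt
  by_cases hji : j = i
  · rwa [← hji]
  · exact absurd (ht.col_le_of_mem_Xset hg hz hji) hj.not_ge

theorem IsGreedy.col_eq_of_le (ht : IsGreedy t) {z : Placement lam}
    (hle : ∀ j ≠ i, t.col j ≤ z.col j) {r : Fin n} (hri : r ≠ i)
    (habove : ∀ q ≤ r, i < q → t.col i < t.col q) : z.col r = t.col r := by
  induction r using WellFoundedLT.induction with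
  | _ r ih =>
    by_contra hne
    obtain ⟨q, hqr, hq⟩ :=
      ht.exists_lt_col_eq (z.pos r) (z.le_part r) (lt_of_le_of_ne (hle r hri) (Ne.symm hne))
    by_cases hqi : q = i
    · subst hqi
      have := habove r le_rfl hqr
      have := hle r hri
      omega
    · have := ih q hqr hqi fun q' hq' => habove q' (hq'.trans hqr.le)
      exact hqr.ne (z.inj (by rw [this, hq]))

theorem PushMove.isLargestFreeCol (hp : PushMove t c i) : IsLargestFreeCol t i (c.col i) := by
  obtain ⟨g, hg₁, hgi, hempty, hbetween, rfl, -⟩ := hp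
  exact ⟨hg₁, hgi, fun q _ => hempty q, hbetween⟩

theorem PushMove.eq_coatomAt (hp : PushMove t c i) :
    c = coatomAt t i (c.col i) hp.isLargestFreeCol := by
  obtain ⟨g, -, -, hempty, -, hci, hrest⟩ := id hp
  ext r
  by_cases hri : r = i
  · rw [hri, coatomAt_col_self]
  · rw [hrest r hri, coatomAt_col_of_ne _ hri (hci ▸ hempty r)]

theorem PushMove.col_lt_col (ht : IsGreedy t) (hp : PushMove t c i) {r : Fin n} (hir : i < r) :
    t.col i < t.col r := by
  obtain ⟨g, -, -, hempty, -, hci, -⟩ := id hp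
  exact ht.col_lt_col_of_isLargestFreeCol hp.isLargestFreeCol hir fun q _ => hci ▸ hempty q

theorem SwitchMove.isLargestFreeCol (ht : IsGreedy t) (hs : SwitchMove t c i k) :
    IsLargestFreeCol t i (t.col k) := by
  obtain ⟨hik, hki, hrect, -⟩ := hs
  refine ⟨t.pos k, hki, fun q hqi h => (hqi.trans hik).ne (t.inj h), fun v hkv hvi => ?_⟩
  obtain ⟨q, hqk, hqv⟩ := ht.exists_lt_col_eq (by have := t.pos k; omega)
    (hvi.le.trans ((t.le_part i).trans (lam.mono hik.le))) hkv
  refine ⟨q, lt_of_not_ge fun hiq => ?_, hqv⟩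
  rcases hrect q hiq hqk.le (hqv ▸ hkv.le) (hqv ▸ hvi.le) with rfl | rfl <;> omega

theorem SwitchMove.eq_coatomAt (ht : IsGreedy t) (hs : SwitchMove t c i k) :
    c = coatomAt t i (t.col k) (hs.isLargestFreeCol ht) := by
  obtain ⟨hik, -, -, hci, hck, hrest⟩ := hs
  ext r
  simp only [coatomAt]
  by_cases hri : r = i
  · rw [hri, hci, Equiv.swap_apply_right]
  by_cases hrk : r = k
  · rw [hrk, hck, Equiv.swap_apply_left]
  · rw [hrest r hri hrk, Equiv.swap_apply_of_ne_of_ne (fun h => hrk (t.inj h))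
      fun h => hri (t.inj h)]

theorem SwitchMove.col_lt_col (ht : IsGreedy t) (hs : SwitchMove t c i k) {r : Fin n}
    (hir : i < r) (hrk : r < k) : t.col i < t.col r :=
  ht.col_lt_col_of_isLargestFreeCol (hs.isLargestFreeCol ht) hir fun _ hq h =>
    (hq.trans_lt hrk).ne (t.inj h)

theorem PushMove.Xset_eq (ht : IsGreedy t) (hp : PushMove t c i) :
    Xset t {c} = {z | ∀ r ≠ i, z.col r = t.col r} := by
  have hg := hp.isLargestFreeCol
  ext z
  rw [hp.eq_coatomAt]
  constructor
  · intro hz r hri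
    exact ht.col_eq_of_le (fun j hj => ht.col_le_of_mem_Xset hg hz hj) hri
      fun q _ hiq => hp.col_lt_col ht hiq
  · intro hz
    rw [ht.mem_Xset_coatomAt_iff]
    refine fun j hji => rookCount_le_rookCount fun r hr htr => ?_
    by_cases hri : r = i
    · subst hri
      have := hp.col_lt_col ht (lt_of_le_of_ne (by omega) (Ne.symm hji))
      omega
    · rwa [hz r hri]

theorem SwitchMove.eq_of_mem_Xset (ht : IsGreedy t) (hs : SwitchMove t c i k)
    {z : Placement lam} (hz : z ∈ Xset t {c}) (hzt : z ≠ t) : z = c := by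
  have hg := hs.isLargestFreeCol ht
  have hc := hs.eq_coatomAt ht
  rw [hc] at hz
  obtain ⟨hik, hki, -, hci, hck, hrest⟩ := id hs
  have hle j (hj : j ≠ i) := ht.col_le_of_mem_Xset hg hz hj
  have hzi_lt := ht.col_lt_of_mem_Xset hg hz hzt
  have hbelow (r : Fin n) (hr : r < i) : z.col r = t.col r :=
    ht.col_eq_of_le hle hr.ne fun q hq hiq => absurd (hiq.trans_le hq) (not_lt.2 hr.le)
  -- the columns strictly between the two rooks are taken by rows below `i`, in `t` and in `z`
  have hgap (r : Fin n) (hir : i ≤ r) (h₁ : t.col k < z.col r) (h₂ : z.col r < t.col i) :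
      False := by
    obtain ⟨q, hq, hqv⟩ := hg.occupied _ h₁ h₂
    exact (hq.trans_le hir).ne (z.inj ((hbelow q hq).trans hqv))
  have hzi : z.col i = t.col k := by
    refine le_antisymm (not_lt.1 fun h => hgap i le_rfl h hzi_lt) (not_lt.1 fun h => ?_)
    -- otherwise `z` lies below the coatom of row `k`
    have hwin (r : Fin n) (hir : i ≤ r) (hrk : r ≤ k) : t.col k ≤ t.col r := by
      rcases hir.lt_or_eq with hir | rfl
      · rcases hrk.lt_or_eq with hrk | rfl
        · exact (hki.trans (hs.col_lt_col ht hir hrk)).le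
        · exact le_rfl
      · exact hki.le
    exact ((ht.mem_Xset_coatomAt_iff hg).mp hz k hik.ne').not_gt
      (ht.rookCount_lt_of_forall_le hik.le hwin h)
  have hzk : t.col i ≤ z.col k := by
    have hne : t.col k ≠ z.col k := fun h => hik.ne (z.inj (hzi.trans h))
    exact not_lt.1 fun h => hgap k hik.le (lt_of_le_of_ne (hle k hik.ne') hne) h
  refine rle_antisymm (hc ▸ (ht.rle_coatomAt_iff hg).mpr (ht.rookCount_lt_of_col_lt hzi_lt))
    (rle_of_forall_col_le fun r => ?_)
  by_cases hri : r = i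
  · rw [hri, hci, hzi]
  by_cases hrk : r = k
  · rw [hrk, hck]
    exact hzk
  · rw [hrest r hri hrk]
    exact hle r hri

theorem SwitchMove.Xset_eq (ht : IsGreedy t) (hs : SwitchMove t c i k) :
    Xset t {c} = {t, c} := by
  refine Set.Subset.antisymm (fun z hz => ?_) ?_
  · by_cases hzt : z = t
    · exact Or.inl hzt
    · exact Or.inr (hs.eq_of_mem_Xset ht hz hzt)
  have hg := hs.isLargestFreeCol ht
  rw [hs.eq_coatomAt ht]
  rintro z (rfl | rfl) <;> refine (ht.mem_Xset_coatomAt_iff hg).mpr fun j hj => ?_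
  · exact le_rfl
  · exact ht.rookCount_le_rookCount_coatomAt_of_ne hg hj

def Placement.moveRook (x : Placement lam) (i : Fin n) (v : ℕ) (hv₁ : 1 ≤ v)
    (hv : v ≤ lam.part i) (hfree : ∀ r ≠ i, x.col r ≠ v) : Placement lam where
  col := Function.update x.col i v
  inj a b h := by
    by_cases ha : a = i <;> by_cases hb : b = i
    · rw [ha, hb]
    · simp only [ha, Function.update_self, Function.update_of_ne hb] at h
      exact absurd h.symm (hfree b hb)
    · simp only [hb, Function.update_self, Function.update_of_ne ha] at h
      exact absurd h (hfree a ha)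
    · exact x.inj (by simpa only [Function.update_of_ne ha, Function.update_of_ne hb] using h)
  pos r := by
    by_cases hr : r = i
    · rw [hr, Function.update_self]; exact hv₁
    · rw [Function.update_of_ne hr]; exact x.pos r
  le_part r := by
    by_cases hr : r = i
    · rw [hr, Function.update_self]; exact hv
    · rw [Function.update_of_ne hr]; exact x.le_part r

theorem rle_or_rle_of_col_eq {x y : Placement lam}
    (h : ∀ r ≠ i, x.col r = y.col r) : rle x y ∨ rle y x := by
  rcases le_total (x.col i) (y.col i) with hi | hi
  · refine Or.inl (rle_of_forall_col_le fun r => ?_)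
    by_cases hri : r = i
    · exact hri ▸ hi
    · exact (h r hri).le
  · refine Or.inr (rle_of_forall_col_le fun r => ?_)
    by_cases hri : r = i
    · exact hri ▸ hi
    · exact (h r hri).ge

theorem IsGreedy.ncard_setOf_col_eq (ht : IsGreedy t)
    (habove : ∀ r, i < r → t.col i < t.col r) :
    {z : Placement lam | ∀ r ≠ i, z.col r = t.col r}.ncard = lam.part i - i := by
  set S := {z : Placement lam | ∀ r ≠ i, z.col r = t.col r}
  have himage : (fun z : Placement lam => z.col i) '' S =
      ↑(Icc 1 (lam.part i) \ (Iio i).image t.col) := by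
    ext v
    simp only [Set.mem_image, coe_sdiff, Set.mem_sdiff, mem_coe, mem_Icc, mem_image, mem_Iio]
    constructor
    · rintro ⟨z, hz, rfl⟩
      exact ⟨⟨z.pos i, z.le_part i⟩, fun ⟨q, hq, hqv⟩ => hq.ne (z.inj ((hz q hq.ne).trans hqv))⟩
    · rintro ⟨⟨hv₁, hv₂⟩, hv⟩
      have hfree (r : Fin n) (hri : r ≠ i) : t.col r ≠ v := by
        rintro rfl
        rcases lt_or_gt_of_ne hri with hr | hr
        · exact hv ⟨r, hr, rfl⟩
        · obtain ⟨q, hq, hqr⟩ := ht.exists_lt_col_eq (t.pos r) hv₂ (habove r hr)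
          exact (hq.trans hr).ne (t.inj hqr)
      refine ⟨t.moveRook i v hv₁ hv₂ hfree, fun r hr => ?_, ?_⟩
      · simp [Placement.moveRook, hr]
      · simp [Placement.moveRook]
  have hinj : Set.InjOn (fun z : Placement lam => z.col i) S := fun z hz z' hz' h => by
    ext r
    by_cases hri : r = i
    · exact hri ▸ h
    · exact (hz r hri).trans (hz' r hri).symm
  have hsub : (Iio i).image t.col ⊆ Icc 1 (lam.part i) := fun v hv => by
    obtain ⟨q, hq, rfl⟩ := mem_image.mp hv
    exact mem_Icc.mpr ⟨t.pos q, (t.le_part q).trans (lam.mono (mem_Iio.mp hq).le)⟩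
  rw [← hinj.ncard_image, himage, Set.ncard_coe_finset, card_sdiff_of_subset hsub,
    Nat.card_Icc, card_image_of_injective _ t.inj, Fin.card_Iio, Nat.add_sub_cancel]

/-- For the coatom `c` of row `i`, the set `X_{{c}}` of elements below no
other coatom is totally ordered; it has exactly `2` elements if `c` is a switch move and
exactly `λ_i - i + 1` elements if `c` is a push move. -/
theorem Xset_singleton_chain {n : ℕ} (lam : Partition n) (t : Placement lam)
    (ht : IsGreedy t) (i : Fin n) (c : Placement lam) (hc : MoveOnRow t c i) :
    (∀ x ∈ Xset t {c}, ∀ y ∈ Xset t {c}, rle x y ∨ rle y x) ∧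
    ((∃ k : Fin n, SwitchMove t c i k) → (Xset t {c}).ncard = 2) ∧
    (PushMove t c i → (Xset t {c}).ncard = lam.part i - (i : ℕ)) := by
  refine ⟨?_, fun ⟨k, hs⟩ => ?_, fun hp => ?_⟩
  · rcases hc with ⟨k, hs⟩ | hp
    · rw [hs.Xset_eq ht]
      rintro x (rfl | rfl) y (rfl | rfl)
      all_goals first
        | exact Or.inl (rle_refl _)
        | exact Or.inl (ht.rle_top _)
        | exact Or.inr (ht.rle_top _)
    · rw [hp.Xset_eq ht]
      exact fun x hx y hy => rle_or_rle_of_col_eq fun r hr => (hx r hr).trans (hy r hr).symm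
  · rw [hs.Xset_eq ht]
    exact Set.ncard_pair fun h => hs.2.1.ne (by rw [← hs.2.2.2.1, h])
  · rw [hp.Xset_eq ht]
    exact ht.ncard_setOf_col_eq fun r hr => hp.col_lt_col ht hr

end RookPoset
end

section
/- (i) For every partition λ with n parts and λ_n ≤ n + 1, the completed permutation σ_{1̂} of the maximum 1̂ of P_λ is a 312-avoiding permutation of {1, …, λ_n}. (ii) Conversely, for every 312-avoiding permutation τ of {1, …, N} there exists a partition λ with n parts, λ_n = N and N ≤ n + 1, such that τ = σ_{1̂} for the maximum 1̂ of P_λ. -/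
/-!
If `λ_n ≤ n + 1`, the middle entry `b` of a would-be 312 pattern `a < b < c ≤ λ_n` is a row
of the board. A pattern `σ_b < σ_c < σ_a` would make `σ_c` a column that is still free at
row `b` (as `σ` is injective) and lies within `λ_a ≤ λ_b`, so the greedy choice in row `b`
forces `σ_c ≤ σ_b`.

Conversely, a 312-avoiding `τ` is the greedy placement on the partition of its prefix maxima
`λ_i = max (τ_1, …, τ_i)`: a free column `m ≤ λ_i` with `τ_i < m` is `τ_c` for some `c > i`,
and with an earlier entry `τ_j ≥ m` it forms the pattern `τ_i < τ_c < τ_j`.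
-/

namespace RookPoset

namespace Partition

variable {n : ℕ} (lam : Partition n)

theorem part_le_maxPart (i : Fin n) : lam.part i ≤ lam.maxPart :=
  Finset.le_sup (Finset.mem_univ i)

theorem maxPart_eq_part_last (hn : 0 < n) : lam.maxPart = lam.part ⟨n - 1, by omega⟩ :=
  le_antisymm (Finset.sup_le fun i _ => lam.mono (Fin.mk_le_mk.mpr (by omega)))
    (lam.part_le_maxPart _)

end Partition

namespace Placement

variable {n : ℕ} {lam : Partition n} (x : Placement lam)

theorem col_mem_Icc (i : Fin n) : x.col i ∈ Finset.Icc 1 lam.maxPart :=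
  Finset.mem_Icc.mpr ⟨x.pos i, (x.le_part i).trans (lam.part_le_maxPart i)⟩

def freeCols : List ℕ :=
  (Finset.Icc 1 lam.maxPart \ Finset.univ.image x.col).sort (· ≤ ·)

theorem length_freeCols : x.freeCols.length = lam.maxPart - n := by
  have hsub : Finset.univ.image x.col ⊆ Finset.Icc 1 lam.maxPart := by
    intro _ h
    obtain ⟨i, -, rfl⟩ := Finset.mem_image.mp h
    exact x.col_mem_Icc i
  rw [freeCols, Finset.length_sort, Finset.card_sdiff_of_subset hsub, Nat.card_Icc,
    Finset.card_image_of_injective _ x.inj, Finset.card_univ, Fintype.card_fin]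
  omega

theorem sigma_of_le {a : ℕ} (ha : 1 ≤ a) (han : a ≤ n) :
    x.sigma a = x.col ⟨a - 1, by omega⟩ :=
  dif_pos ⟨ha, han⟩

theorem sigma_succ (i : Fin n) : x.sigma (i + 1) = x.col i :=
  x.sigma_of_le (by omega) i.isLt

theorem sigma_of_lt_of_le {a : ℕ} (hna : n < a) (haM : a ≤ lam.maxPart) :
    x.sigma a = x.freeCols[a - n - 1]'(by rw [length_freeCols]; omega) := by
  rw [← List.getD_eq_getElem (d := 0)]
  exact dif_neg (by omega)

theorem sigma_mem_Icc {a : ℕ} (ha : 1 ≤ a) (haM : a ≤ lam.maxPart) :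
    x.sigma a ∈ Finset.Icc 1 lam.maxPart := by
  rcases le_or_gt a n with han | hna
  · rw [x.sigma_of_le ha han]
    exact x.col_mem_Icc _
  · rw [x.sigma_of_lt_of_le hna haM]
    exact (Finset.mem_sdiff.mp (Finset.mem_sort _ |>.mp (List.getElem_mem _))).1

theorem sigma_mem_image_col_iff {a : ℕ} (ha : 1 ≤ a) (haM : a ≤ lam.maxPart) :
    x.sigma a ∈ Finset.univ.image x.col ↔ a ≤ n := by
  refine ⟨fun hmem => ?_, fun han => ?_⟩
  · by_contra! hna
    rw [x.sigma_of_lt_of_le hna haM] at hmem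
    exact (Finset.mem_sdiff.mp (Finset.mem_sort _ |>.mp (List.getElem_mem _))).2 hmem
  · rw [x.sigma_of_le ha han]
    exact Finset.mem_image_of_mem _ (Finset.mem_univ _)

theorem injOn_sigma : Set.InjOn x.sigma (Set.Icc 1 lam.maxPart) := by
  rintro a ⟨ha, haM⟩ b ⟨hb, hbM⟩ hab
  have hside := (x.sigma_mem_image_col_iff ha haM).symm.trans
    (hab ▸ x.sigma_mem_image_col_iff hb hbM)
  rcases le_or_gt a n with han | hna
  · rw [x.sigma_of_le ha han, x.sigma_of_le hb (hside.mp han)] at hab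
    have := Fin.mk.inj_iff.mp (x.inj hab)
    omega
  · have hnb : n < b := lt_of_not_ge (mt hside.mpr (by omega))
    have hnodup : x.freeCols.Nodup := Finset.sort_nodup _ _
    rw [x.sigma_of_lt_of_le hna haM, x.sigma_of_lt_of_le hnb hbM,
      hnodup.getElem_inj_iff] at hab
    omega

theorem bijOn_sigma : Set.BijOn x.sigma (Set.Icc 1 lam.maxPart) (Set.Icc 1 lam.maxPart) :=
  ((Set.finite_Icc _ _).injOn_iff_bijOn_of_mapsTo
    (fun _ ha => by simpa using x.sigma_mem_Icc ha.1 ha.2)).mp x.injOn_sigma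

end Placement

theorem IsGreedy.le_col {n : ℕ} {lam : Partition n} {t : Placement lam} (ht : IsGreedy t)
    {i j : Fin n} (hij : i ≤ j) {m : ℕ} (hm : 1 ≤ m) (hmi : m ≤ t.col i)
    (hfree : ∀ k < j, t.col k ≠ m) : m ≤ t.col j :=
  ht j m hm ((hmi.trans (t.le_part i)).trans (lam.mono hij)) hfree

theorem IsGreedy.avoids312_sigma {n : ℕ} {lam : Partition n} {t : Placement lam}
    (ht : IsGreedy t) (hM : lam.maxPart ≤ n + 1) : Avoids312 lam.maxPart t.sigma := by
  rintro a b c ha hab hbc hcM ⟨hσbc, hσca⟩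
  have hσ := t.bijOn_sigma
  have hfree : ∀ k < (⟨b - 1, by omega⟩ : Fin n), t.col k ≠ t.sigma c := by
    intro k (hk : (k : ℕ) < b - 1) hkc
    have := hσ.injOn ⟨by omega, by omega⟩ ⟨by omega, hcM⟩ ((t.sigma_succ k).trans hkc)
    omega
  have hσa := t.sigma_of_le ha (by omega : a ≤ n)
  have hle := ht.le_col (i := ⟨a - 1, by omega⟩) (Fin.mk_le_mk.mpr (by omega))
    (hσ.mapsTo ⟨by omega, hcM⟩).1 (hσa ▸ hσca.le) hfree
  rw [← t.sigma_of_le (by omega) (by omega : b ≤ n)] at hle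
  omega

theorem card_le_sup_of_injOn {α : Type*} {s : Finset α} {f : α → ℕ} (hinj : Set.InjOn f s)
    (hpos : ∀ a ∈ s, 1 ≤ f a) : s.card ≤ s.sup f := by
  have hsub : s.image f ⊆ Finset.Icc 1 (s.sup f) := by
    intro _ h
    obtain ⟨a, ha, rfl⟩ := Finset.mem_image.mp h
    exact Finset.mem_Icc.mpr ⟨hpos a ha, Finset.le_sup ha⟩
  simpa [Finset.card_image_of_injOn hinj] using Finset.card_le_card hsub

section PrefixMax

variable {N : ℕ} {τ : ℕ → ℕ}

theorem sup_Icc_eq_of_bijOn (hτ : Set.BijOn τ (Set.Icc 1 N) (Set.Icc 1 N)) :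
    (Finset.Icc 1 N).sup τ = N := by
  refine le_antisymm (Finset.sup_le fun a ha => (hτ.mapsTo (by simpa using ha)).2) ?_
  rcases Nat.eq_zero_or_pos N with rfl | hN
  · exact le_rfl
  · obtain ⟨c, hc, hcN⟩ := hτ.surjOn ⟨hN, le_rfl⟩
    calc N = τ c := hcN.symm
      _ ≤ _ := Finset.le_sup (by simpa using hc)

def prefixMaxPartition (hτ : Set.BijOn τ (Set.Icc 1 N) (Set.Icc 1 N)) : Partition N where
  part i := (Finset.Icc 1 ((i : ℕ) + 1)).sup τ
  mono _ _ hij := Finset.sup_mono (Finset.Icc_subset_Icc_right (Nat.add_le_add_right hij 1))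
  staircase i := by
    have hsub : (Finset.Icc 1 ((i : ℕ) + 1) : Set ℕ) ⊆ Set.Icc 1 N := by
      intro a ha
      have := i.isLt
      simp only [Finset.coe_Icc, Set.mem_Icc] at ha ⊢
      omega
    simpa using card_le_sup_of_injOn (hτ.injOn.mono hsub) fun a ha => (hτ.mapsTo (hsub ha)).1

def prefixMaxPlacement (hτ : Set.BijOn τ (Set.Icc 1 N) (Set.Icc 1 N)) :
    Placement (prefixMaxPartition hτ) where
  col i := τ ((i : ℕ) + 1)
  inj i j h := Fin.ext (by have := hτ.injOn ⟨by omega, i.isLt⟩ ⟨by omega, j.isLt⟩ h; omega)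
  pos i := (hτ.mapsTo ⟨by omega, i.isLt⟩).1
  le_part _ := Finset.le_sup (f := τ) (Finset.mem_Icc.mpr ⟨Nat.le_add_left 1 _, le_rfl⟩)

theorem maxPart_prefixMaxPartition (hτ : Set.BijOn τ (Set.Icc 1 N) (Set.Icc 1 N)) :
    (prefixMaxPartition hτ).maxPart = N := by
  rcases Nat.eq_zero_or_pos N with rfl | hN
  · rfl
  · rw [Partition.maxPart_eq_part_last _ hN]
    show (Finset.Icc 1 (N - 1 + 1)).sup τ = N
    rw [Nat.sub_add_cancel hN]
    exact sup_Icc_eq_of_bijOn hτ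

theorem sigma_prefixMaxPlacement (hτ : Set.BijOn τ (Set.Icc 1 N) (Set.Icc 1 N)) :
    Set.EqOn τ (prefixMaxPlacement hτ).sigma (Set.Icc 1 N) := by
  rintro a ⟨ha, haN⟩
  rw [Placement.sigma_of_le _ ha haN]
  simp only [prefixMaxPlacement, Nat.sub_add_cancel ha]

theorem isGreedy_prefixMaxPlacement (hτ : Set.BijOn τ (Set.Icc 1 N) (Set.Icc 1 N))
    (h312 : Avoids312 N τ) :
    IsGreedy (prefixMaxPlacement hτ) := by
  intro i m hm hmpart hfree
  by_contra! hlt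
  simp only [prefixMaxPlacement] at hlt hfree
  simp only [prefixMaxPartition] at hmpart
  obtain ⟨j, hj, hmj⟩ := (Finset.le_sup_iff hm).mp hmpart
  rw [Finset.mem_Icc] at hj
  have hi := i.isLt
  have hmN : m ≤ N := hmj.trans (hτ.mapsTo ⟨hj.1, by omega⟩).2
  obtain ⟨c, ⟨hc, hcN⟩, rfl⟩ := hτ.surjOn ⟨hm, hmN⟩
  have hic : (i : ℕ) + 1 < c := by
    by_contra! hci
    rcases hci.lt_or_eq with hci | rfl
    · refine hfree ⟨c - 1, by omega⟩ (Fin.mk_lt_of_lt_val (by omega)) ?_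
      rw [Nat.sub_add_cancel hc]
    · exact lt_irrefl _ hlt
  have hcj : τ c < τ j := hmj.lt_of_ne fun h => by
    have := hτ.injOn ⟨hc, hcN⟩ ⟨hj.1, by omega⟩ h
    omega
  have hji : j < (i : ℕ) + 1 := lt_of_le_of_ne hj.2 (by rintro rfl; omega)
  exact h312 j (i + 1) c hj.1 hji hic hcN ⟨hlt, hcj⟩

end PrefixMax

/-- (i) For a partition with `λ_n ≤ n + 1`, the completed permutation of
the greedy maximum `1̂` is a `312`-avoiding permutation of `{1, …, λ_n}`. (ii) Every
`312`-avoiding permutation of `{1, …, N}` arises this way from a partition with `n` parts,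
`λ_n = N` and `N ≤ n + 1`. -/
theorem sigma_top_avoids312 :
    (∀ (n : ℕ) (lam : Partition n) (t : Placement lam), IsGreedy t →
      lam.maxPart ≤ n + 1 →
      Set.BijOn t.sigma (Set.Icc 1 lam.maxPart) (Set.Icc 1 lam.maxPart) ∧
      Avoids312 lam.maxPart t.sigma) ∧
    (∀ (N : ℕ) (τ : ℕ → ℕ), Set.BijOn τ (Set.Icc 1 N) (Set.Icc 1 N) → Avoids312 N τ →
      ∃ (n : ℕ) (lam : Partition n) (t : Placement lam), IsGreedy t ∧
        lam.maxPart = N ∧ N ≤ n + 1 ∧ Set.EqOn τ t.sigma (Set.Icc 1 N)) :=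
  ⟨fun _ _ t ht hM => ⟨t.bijOn_sigma, ht.avoids312_sigma hM⟩,
    fun N _ hτ h312 => ⟨N, prefixMaxPartition hτ, prefixMaxPlacement hτ,
      isGreedy_prefixMaxPlacement hτ h312, maxPart_prefixMaxPartition hτ, N.le_succ,
      sigma_prefixMaxPlacement hτ⟩⟩

end RookPoset
end

section
/- Let λ be a partition with n parts such that λ_n ≤ n + 1 (the last entry of the GJW sequence is 0 or 1). Then the map x ↦ σ_x is an order isomorphism from the rook poset P_λ onto the lower interval {τ ∈ S_{λ_n} : τ ≤ σ_{1̂}} of the symmetric group on {1, …, λ_n} under the Bruhat order, where the Bruhat order is characterized by: σ ≤ τ iff for every j, when {σ(1), …, σ(j)} and {τ(1), …, τ(j)} are each listed in increasing order, the list for σ is componentwise ≤ the list for τ. -/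
/-!
Because `λ_n ≤ n + 1`, the completion of `x` fills at most one extra position, with the unique
column that `x` misses; so `σ_x` is a permutation of `{1, …, λ_n}` whose first `j` values are
`{x_1, …, x_j}` for `j ≤ n` and all of `{1, …, λ_n}` for `j > n`, and the rook order is exactly
the Bruhat order on the `σ_x`. Every placement lies below the greedy one: two sorted sets of equal
size compare componentwise as soon as, for every threshold `v`, the second has at least as many
elements `≥ v`, and among the first `j` rows the greedy placement has the most rooks in columns
`≥ v`, because a row whose greedy rook lies left of `v` has all columns from `v` to `λ_i` filled
by lower rows. Conversely, if `π ≤ σ_{1̂}` then `π(i) ≤ max {1̂_1, …, 1̂_i} ≤ λ_i` for `i ≤ n`, so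
the first `n` values of `π` form a placement `x`, and `σ_x = π` since two permutations that agree
off a single point are equal.
-/

open Finset

theorem Equiv.eq_of_eqOn_compl {α β : Type*} {e f : α ≃ β} {s : Set α} (hs : s.Subsingleton)
    (h : Set.EqOn e f sᶜ) : e = f := by
  ext a
  by_cases ha : a ∈ s
  · have hb : e.symm (f a) ∈ s := by
      by_contra hb
      have hfa : f (e.symm (f a)) = f a := by rw [← h hb, Equiv.apply_symm_apply]
      exact hb (by rwa [f.injective hfa])
    exact ((e.symm_apply_eq).mp (hs hb ha)).symm
  · exact h ha

theorem List.Forall₂.le_of_mem_left {α : Type*} [Preorder α] {l₁ l₂ : List α}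
    (h : List.Forall₂ (· ≤ ·) l₁ l₂) {B : α} (hB : ∀ b ∈ l₂, b ≤ B) {a : α} (ha : a ∈ l₁) :
    a ≤ B := by
  induction h with
  | nil => simp at ha
  | cons hab _ ih =>
    rcases List.mem_cons.mp ha with rfl | ha
    · exact hab.trans (hB _ List.mem_cons_self)
    · exact ih (fun b hb => hB b (List.mem_cons_of_mem _ hb)) ha

theorem Finset.forall₂_sort_le_of_card_filter_le {α : Type*} [LinearOrder α] {S T : Finset α}
    (hcard : #T = #S) (h : ∀ v, #{s ∈ S | v ≤ s} ≤ #{t ∈ T | v ≤ t}) :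
    List.Forall₂ (· ≤ ·) S.sort T.sort := by
  set eS := S.orderEmbOfFin rfl
  set eT := T.orderEmbOfFin hcard
  rw [← S.listMap_orderEmbOfFin_finRange rfl, ← T.listMap_orderEmbOfFin_finRange hcard,
    List.forall₂_map_left_iff, List.forall₂_map_right_iff, List.forall₂_same]
  intro k _
  by_contra! hlt
  have hS : #S - k ≤ #{s ∈ S | eS k ≤ s} := by
    rw [← Fin.card_Ici, ← card_map eS.toEmbedding]
    refine card_le_card fun s hs => ?_
    obtain ⟨i, hi, rfl⟩ := mem_map.mp hs
    exact mem_filter.mpr ⟨S.orderEmbOfFin_mem rfl i, eS.monotone (mem_Ici.mp hi)⟩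
  have hT : #{t ∈ T | eS k ≤ t} ≤ #S - 1 - k := by
    rw [← Fin.card_Ioi, ← card_map eT.toEmbedding]
    refine card_le_card fun t ht => ?_
    obtain ⟨htT, hkt⟩ := mem_filter.mp ht
    obtain ⟨i, rfl⟩ : t ∈ Set.range eT := by rwa [T.range_orderEmbOfFin]
    exact mem_map_of_mem _ (mem_Ioi.mpr (eT.lt_iff_lt.mp (hlt.trans_le hkt)))
  have := h (eS k)
  omega

namespace RookPoset

section InitialSegments

variable {m : ℕ}

def initSet (f : Fin m → ℕ) (j : ℕ) : Finset ℕ :=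
  (univ.filter fun i : Fin m => (i : ℕ) < j).image f

theorem initSeg_eq_sort (f : Fin m → ℕ) (j : ℕ) : initSeg f j = (initSet f j).sort := rfl

@[simp]
theorem mem_initSet {f : Fin m → ℕ} {j c : ℕ} :
    c ∈ initSet f j ↔ ∃ i : Fin m, (i : ℕ) < j ∧ f i = c := by
  simp [initSet]

theorem mem_initSeg {f : Fin m → ℕ} {j c : ℕ} :
    c ∈ initSeg f j ↔ ∃ i : Fin m, (i : ℕ) < j ∧ f i = c := by
  rw [initSeg_eq_sort, mem_sort, mem_initSet]

theorem initSet_zero (f : Fin m → ℕ) : initSet f 0 = ∅ := by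
  ext; simp

theorem initSet_succ (f : Fin m → ℕ) (i : Fin m) :
    initSet f (i + 1) = insert (f i) (initSet f i) := by
  ext c
  simp only [mem_initSet, mem_insert, Nat.lt_succ_iff_lt_or_eq, Fin.val_inj]
  grind

theorem notMem_initSet {f : Fin m → ℕ} (hf : Function.Injective f) (i : Fin m) :
    f i ∉ initSet f i := by
  simp [hf.eq_iff]

theorem card_initSet {f : Fin m → ℕ} (hf : Function.Injective f) {j : ℕ} (hj : j ≤ m) :
    #(initSet f j) = j := by
  rw [initSet, card_image_of_injective _ hf, Fin.card_filter_val_lt, min_eq_right hj]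

theorem initSeg_min (f : Fin m → ℕ) (j : ℕ) : initSeg f (min j m) = initSeg f j := by
  rw [initSeg_eq_sort, initSeg_eq_sort]
  congr 1
  ext c
  simp only [mem_initSet]
  grind

theorem initSeg_congr {m' : ℕ} {f : Fin m → ℕ} {g : Fin m' → ℕ} {j : ℕ} (hm : j ≤ m)
    (hm' : j ≤ m') (h : ∀ i (hi : i < j), f ⟨i, by omega⟩ = g ⟨i, by omega⟩) :
    initSeg f j = initSeg g j := by
  rw [initSeg_eq_sort, initSeg_eq_sort]
  congr 1
  ext c
  simp only [mem_initSet]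
  constructor
  · rintro ⟨i, hi, rfl⟩
    exact ⟨⟨i, by omega⟩, hi, (h i hi).symm⟩
  · rintro ⟨i, hi, rfl⟩
    exact ⟨⟨i, by omega⟩, hi, h i hi⟩

theorem map_initSeg {g : ℕ → ℕ} (hg : StrictMono g) (f : Fin m → ℕ) (j : ℕ) :
    (initSeg f j).map g = initSeg (g ∘ f) j := by
  rw [initSeg_eq_sort, initSeg_eq_sort]
  refine ((hg.strictMonoOn (initSet f j)).map_finsetSort (f := ⟨g, hg.injective⟩)).trans ?_
  rw [map_eq_image, initSet, initSet, image_image]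
  rfl

theorem initSeg_perm_of_le (σ : Equiv.Perm (Fin m)) {j : ℕ} (hj : m ≤ j) :
    initSeg (fun a => (σ a : ℕ)) j = initSeg (fun a : Fin m => (a : ℕ)) j := by
  rw [← initSeg_min, ← initSeg_min (fun a : Fin m => (a : ℕ)), min_eq_right hj,
    initSeg_eq_sort, initSeg_eq_sort]
  simp only [initSet, Fin.is_lt, filter_true]
  congr 1
  ext c
  simpa using (σ.surjective.exists (p := fun a => (a : ℕ) = c)).symm

end InitialSegments

noncomputable def permOfInjOn {N : ℕ} (f : ℕ → ℕ)
    (hmaps : Set.MapsTo f (Set.Icc 1 N) (Set.Icc 1 N)) (hinj : Set.InjOn f (Set.Icc 1 N)) :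
    Equiv.Perm (Fin N) :=
  have hf (a : Fin N) : f (a + 1) ∈ Set.Icc 1 N := hmaps ⟨by omega, a.isLt⟩
  Equiv.ofBijective (fun a => ⟨f (a + 1) - 1, by obtain ⟨h₁, h₂⟩ := hf a; omega⟩) <|
    Finite.injective_iff_bijective.mp fun a b hab => by
      have ha := hf a
      have hb := hf b
      simp only [Set.mem_Icc, Fin.mk.injEq] at ha hb hab
      have := hinj (x₁ := a + 1) (x₂ := b + 1) ⟨by omega, a.isLt⟩ ⟨by omega, b.isLt⟩ (by omega)
      omega

theorem permOfInjOn_apply {N : ℕ} {f : ℕ → ℕ}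
    (hmaps : Set.MapsTo f (Set.Icc 1 N) (Set.Icc 1 N)) (hinj : Set.InjOn f (Set.Icc 1 N))
    (a : Fin N) :
    (permOfInjOn f hmaps hinj a : ℕ) + 1 = f (a + 1) := by
  have : 1 ≤ f (a + 1) := (hmaps ⟨by omega, a.isLt⟩).1
  simp only [permOfInjOn, Equiv.ofBijective_apply]
  omega

section Placement

variable {n : ℕ} {lam : Partition n}

theorem Partition.part_le_maxPart_s16 (lam : Partition n) (i : Fin n) : lam.part i ≤ lam.maxPart :=
  le_sup (mem_univ i)

theorem Partition.le_maxPart (lam : Partition n) : n ≤ lam.maxPart := by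
  cases n with
  | zero => exact Nat.zero_le _
  | succ k => exact (lam.staircase (Fin.last k)).trans (lam.part_le_maxPart_s16 _)

theorem Placement.ext_col {x y : Placement lam} (h : x.col = y.col) : x = y := by
  cases x; cases y; simpa using h

theorem Placement.col_le_part_of_le (x : Placement lam) {i k : Fin n} (h : i ≤ k) :
    x.col i ≤ lam.part k :=
  (x.le_part i).trans (lam.mono h)

theorem Placement.le_part_of_mem_initSet (x : Placement lam) (k : Fin n) {c : ℕ}
    (hc : c ∈ initSet x.col (k + 1)) : c ≤ lam.part k := by
  obtain ⟨i, hi, rfl⟩ := mem_initSet.mp hc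
  exact x.col_le_part_of_le (Fin.le_iff_val_le_val.mpr (by omega))

theorem Placement.sigma_col (x : Placement lam) (i : Fin n) : x.sigma (i + 1) = x.col i := by
  rw [Placement.sigma, dif_pos ⟨by omega, i.isLt⟩]
  rfl

theorem Placement.sigma_succ_mem (x : Placement lam) (h : n < lam.maxPart) :
    x.sigma (n + 1) ∈ Icc 1 lam.maxPart \ univ.image x.col := by
  have hS : 0 < (Icc 1 lam.maxPart \ univ.image x.col).sort.length := by
    have := le_card_sdiff (univ.image x.col) (Icc 1 lam.maxPart)
    rw [Nat.card_Icc, card_image_of_injective _ x.inj, card_univ, Fintype.card_fin] at this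
    rw [length_sort]
    omega
  rw [Placement.sigma, dif_neg (by omega), show n + 1 - n - 1 = 0 by omega,
    List.getD_eq_getElem _ _ hS]
  exact (mem_sort _).mp (List.getElem_mem hS)

theorem Placement.sigma_succ_ne_col (x : Placement lam) (h : n < lam.maxPart) (i : Fin n) :
    x.sigma (n + 1) ≠ x.col i := fun he =>
  (mem_sdiff.mp (x.sigma_succ_mem h)).2 (mem_image.mpr ⟨i, mem_univ i, he.symm⟩)

theorem Partition.mem_Icc_maxPart_cases (hN : lam.maxPart ≤ n + 1) {a : ℕ}
    (ha : a ∈ Set.Icc 1 lam.maxPart) :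
    (∃ i : Fin n, a = i + 1) ∨ (a = n + 1 ∧ n < lam.maxPart) := by
  obtain ⟨ha1, ha2⟩ := ha
  by_cases h : a ≤ n
  · exact Or.inl ⟨⟨a - 1, by omega⟩, by simp only; omega⟩
  · exact Or.inr ⟨by omega, by omega⟩

theorem Placement.sigma_mapsTo (hN : lam.maxPart ≤ n + 1) (x : Placement lam) :
    Set.MapsTo x.sigma (Set.Icc 1 lam.maxPart) (Set.Icc 1 lam.maxPart) := by
  intro a ha
  rcases lam.mem_Icc_maxPart_cases hN ha with ⟨i, rfl⟩ | ⟨rfl, h⟩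
  · rw [x.sigma_col]
    exact ⟨x.pos i, (x.le_part i).trans (lam.part_le_maxPart_s16 i)⟩
  · simpa using (mem_sdiff.mp (x.sigma_succ_mem h)).1

theorem Placement.sigma_injOn (hN : lam.maxPart ≤ n + 1) (x : Placement lam) :
    Set.InjOn x.sigma (Set.Icc 1 lam.maxPart) := by
  intro a ha b hb hab
  rcases lam.mem_Icc_maxPart_cases hN ha with ⟨i, rfl⟩ | ⟨rfl, h⟩ <;>
    rcases lam.mem_Icc_maxPart_cases hN hb with ⟨k, rfl⟩ | ⟨rfl, h'⟩
  · rw [x.sigma_col, x.sigma_col] at hab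
    rw [x.inj hab]
  · rw [x.sigma_col] at hab
    exact absurd hab.symm (x.sigma_succ_ne_col h' i)
  · rw [x.sigma_col] at hab
    exact absurd hab (x.sigma_succ_ne_col h k)
  · rfl

noncomputable def toPerm (hN : lam.maxPart ≤ n + 1) (x : Placement lam) :
    Equiv.Perm (Fin lam.maxPart) :=
  permOfInjOn x.sigma (x.sigma_mapsTo hN) (x.sigma_injOn hN)

theorem toPerm_apply (hN : lam.maxPart ≤ n + 1) (x : Placement lam) (a : Fin lam.maxPart) :
    (toPerm hN x a : ℕ) + 1 = x.sigma (a + 1) :=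
  permOfInjOn_apply _ _ a

theorem toPerm_castLE (hN : lam.maxPart ≤ n + 1) (x : Placement lam) (i : Fin n) :
    (toPerm hN x (Fin.castLE lam.le_maxPart i) : ℕ) + 1 = x.col i := by
  rw [toPerm_apply, Fin.val_castLE, x.sigma_col]

theorem toPerm_injective (hN : lam.maxPart ≤ n + 1) : Function.Injective (toPerm hN) := by
  intro x y h
  apply Placement.ext_col
  funext i
  rw [← toPerm_castLE hN x, ← toPerm_castLE hN y, h]

theorem map_initSeg_toPerm (hN : lam.maxPart ≤ n + 1) (x : Placement lam) {j : ℕ}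
    (hj : j ≤ n) :
    (initSeg (fun a => (toPerm hN x a : ℕ)) j).map (· + 1) = initSeg x.col j := by
  rw [map_initSeg add_left_strictMono]
  exact initSeg_congr (hj.trans lam.le_maxPart) hj fun i hi => toPerm_castLE hN x ⟨i, by omega⟩

theorem forall₂_initSeg_toPerm_iff (hN : lam.maxPart ≤ n + 1) (x y : Placement lam) {j : ℕ}
    (hj : j ≤ n) :
    List.Forall₂ (· ≤ ·) (initSeg (fun a => (toPerm hN x a : ℕ)) j)
        (initSeg (fun a => (toPerm hN y a : ℕ)) j) ↔
      List.Forall₂ (· ≤ ·) (initSeg x.col j) (initSeg y.col j) := by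
  rw [← map_initSeg_toPerm hN x hj, ← map_initSeg_toPerm hN y hj, List.forall₂_map_left_iff,
    List.forall₂_map_right_iff]
  simp only [Nat.add_le_add_iff_right]

theorem rle_iff_forall_le (x y : Placement lam) :
    rle x y ↔ ∀ j ≤ n, List.Forall₂ (· ≤ ·) (initSeg x.col j) (initSeg y.col j) := by
  refine ⟨fun h j _ => h j, fun h j => ?_⟩
  rw [← initSeg_min x.col, ← initSeg_min y.col]
  exact h _ (min_le_right _ _)

theorem rle_iff_bruhatLE (hN : lam.maxPart ≤ n + 1) (x y : Placement lam) :
    rle x y ↔ bruhatLE (toPerm hN x) (toPerm hN y) := by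
  rw [rle_iff_forall_le]
  refine ⟨fun h j => ?_, fun h j hj => (forall₂_initSeg_toPerm_iff hN x y hj).mp (h j)⟩
  rcases le_or_gt j n with hj | hj
  · exact (forall₂_initSeg_toPerm_iff hN x y hj).mpr (h j hj)
  · have hj : lam.maxPart ≤ j := by omega
    rw [initSeg_perm_of_le _ hj, initSeg_perm_of_le _ hj]
    exact List.forall₂_same.mpr fun _ _ => le_rfl

theorem IsGreedy.Icc_subset_initSet {t : Placement lam} (ht : IsGreedy t) (i : Fin n) {v : ℕ}
    (hv : t.col i < v) : Icc v (lam.part i) ⊆ initSet t.col i := by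
  intro c hc
  obtain ⟨hvc, hc⟩ := mem_Icc.mp hc
  by_contra hnot
  have := ht i c (by omega) hc fun k hk hkc => hnot (mem_initSet.mpr ⟨k, hk, hkc⟩)
  omega

theorem IsGreedy.card_filter_initSet_le {t : Placement lam} (ht : IsGreedy t)
    (x : Placement lam) {j : ℕ} (hj : j ≤ n) (v : ℕ) :
    #{c ∈ initSet x.col j | v ≤ c} ≤ #{c ∈ initSet t.col j | v ≤ c} := by
  induction j with
  | zero => simp [initSet_zero]
  | succ j ih =>
    let i : Fin n := ⟨j, hj⟩
    have hsucc (f : Fin n → ℕ) : initSet f (j + 1) = insert (f i) (initSet f j) := initSet_succ f i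
    by_cases hv : v ≤ t.col i
    · rw [hsucc, hsucc, filter_insert, filter_insert, if_pos hv,
        card_insert_of_notMem (mem_filter.not.mpr fun h => notMem_initSet t.inj i h.1)]
      calc _ ≤ #{c ∈ initSet x.col j | v ≤ c} + 1 := by
            split_ifs
            · exact card_insert_le _ _
            · exact Nat.le_succ _
        _ ≤ _ := Nat.add_le_add_right (ih (by omega)) 1
    · calc #{c ∈ initSet x.col (j + 1) | v ≤ c}
          ≤ #(Icc v (lam.part i)) := card_le_card fun c hc => by
            obtain ⟨hc, hvc⟩ := mem_filter.mp hc
            exact mem_Icc.mpr ⟨hvc, x.le_part_of_mem_initSet i hc⟩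
        _ ≤ #{c ∈ initSet t.col j | v ≤ c} := card_le_card fun c hc =>
            mem_filter.mpr ⟨ht.Icc_subset_initSet i (not_le.mp hv) hc, (mem_Icc.mp hc).1⟩
        _ ≤ #{c ∈ initSet t.col (j + 1) | v ≤ c} := by
            rw [hsucc]
            exact card_le_card (filter_subset_filter _ (subset_insert _ _))

theorem IsGreedy.rle {t : Placement lam} (ht : IsGreedy t) (x : Placement lam) : rle x t := by
  refine (rle_iff_forall_le x t).mpr fun j hj => ?_
  rw [initSeg_eq_sort, initSeg_eq_sort]
  exact forall₂_sort_le_of_card_filter_le (by rw [card_initSet x.inj hj, card_initSet t.inj hj])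
    (ht.card_filter_initSet_le x hj)

theorem exists_toPerm_eq (hN : lam.maxPart ≤ n + 1) (y : Placement lam)
    {π : Equiv.Perm (Fin lam.maxPart)} (hπ : bruhatLE π (toPerm hN y)) :
    ∃ x : Placement lam, toPerm hN x = π := by
  have hbound (i : Fin n) : (π (Fin.castLE lam.le_maxPart i) : ℕ) + 1 ≤ lam.part i := by
    have h : List.Forall₂ (· ≤ ·) ((initSeg (fun a => (π a : ℕ)) (i + 1)).map (· + 1))
        (initSeg y.col (i + 1)) := by
      rw [← map_initSeg_toPerm hN y i.isLt, List.forall₂_map_left_iff, List.forall₂_map_right_iff]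
      exact (hπ (i + 1)).imp fun _ _ => Nat.add_le_add_right (k := 1)
    refine h.le_of_mem_left (fun c hc => y.le_part_of_mem_initSet i ?_) ?_
    · rwa [initSeg_eq_sort, mem_sort] at hc
    · exact List.mem_map_of_mem (mem_initSeg.mpr ⟨_, Nat.lt_succ_self _, rfl⟩)
  let x : Placement lam :=
    ⟨fun i => π (Fin.castLE lam.le_maxPart i) + 1,
      fun i k h => Fin.castLE_injective _ (π.injective (Fin.ext (by simpa using h))),
      fun _ => Nat.le_add_left 1 _, hbound⟩
  refine ⟨x, Equiv.eq_of_eqOn_compl (s := {a | n ≤ (a : ℕ)})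
    (fun a (ha : n ≤ (a : ℕ)) b (hb : n ≤ (b : ℕ)) => Fin.ext (by omega)) fun a ha => ?_⟩
  have hx : (toPerm hN x a : ℕ) + 1 = π a + 1 := toPerm_castLE hN x ⟨a, not_le.mp ha⟩
  exact Fin.ext (Nat.add_right_cancel hx)

end Placement

/-- If the last GJW entry is `0` or `1` (i.e. `λ_n ≤ n + 1`), the map
`x ↦ σ_x` is an order isomorphism from the rook poset onto the lower Bruhat interval below
`σ_{1̂}` in the symmetric group on `{1, …, λ_n}`. -/
theorem rookPoset_iso_bruhat_interval {n : ℕ} (lam : Partition n)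
    (hN : lam.maxPart ≤ n + 1) (t : Placement lam) (ht : IsGreedy t) :
    ∃ e : Placement lam → Equiv.Perm (Fin lam.maxPart),
      Function.Injective e ∧
      (∀ (x : Placement lam) (a : Fin lam.maxPart),
        ((e x) a : ℕ) + 1 = x.sigma ((a : ℕ) + 1)) ∧
      (∀ x y : Placement lam, rle x y ↔ bruhatLE (e x) (e y)) ∧
      Set.range e = {π : Equiv.Perm (Fin lam.maxPart) | bruhatLE π (e t)} := by
  refine ⟨toPerm hN, toPerm_injective hN, toPerm_apply hN, rle_iff_bruhatLE hN, ?_⟩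
  ext π
  refine ⟨?_, exists_toPerm_eq hN t⟩
  rintro ⟨x, rfl⟩
  exact (rle_iff_bruhatLE hN x t).mp (ht.rle x)

end RookPoset
end
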